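/- arXiv:2009.01357 — 2 statements merged into one kernel-verified Lean document; each statement's English description precedes it below -/
import Mathlib

section
/- Let 𝒢 be an ultragraph and R a commutative unital ring. Then L_R(𝒢_r) and L_R(𝒢) are isomorphic as R-algebras; moreover there is an isomorphism mapping the generators s_e ↦ s_e, s_e* ↦ s_e* (e ∈ 𝒢¹) and p_A ↦ p_A for all A ∈ 𝒢⁰. -/
set_option maxHeartbeats 1000000
set_option synthInstance.maxHeartbeats 400000


noncomputable section KeyUltragraph

namespace UltragraphKey

variable {V : Type*}

/-- ℤ-valued indicator function of a set. -/
def indZ (A : Set V) : V → ℤ := A.indicator 1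

lemma indZ_empty : indZ (∅ : Set V) = 0 := by
  funext v; simp [indZ]

lemma indZ_mul (A B : Set V) : indZ A * indZ B = indZ (A ∩ B) := by
  funext v
  by_cases hA : v ∈ A <;> by_cases hB : v ∈ B <;>
    simp [indZ, Set.indicator, hA, hB, Set.mem_inter_iff]

lemma indZ_union (A B : Set V) : indZ (A ∪ B) = indZ A + indZ B - indZ (A ∩ B) := by
  funext v
  by_cases hA : v ∈ A <;> by_cases hB : v ∈ B <;>
    simp [indZ, Set.indicator, hA, hB, Set.mem_inter_iff, Set.mem_union]

lemma indZ_diff (A B : Set V) : indZ (A \ B) = indZ A - indZ (A ∩ B) := by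
  funext v
  by_cases hA : v ∈ A <;> by_cases hB : v ∈ B <;>
    simp [indZ, Set.indicator, hA, hB, Set.mem_inter_iff, Set.mem_diff]

variable {S : Type*} [CommRing S]

variable (𝒟 : Set (Set V)) (p : Set V → S)

/-- Pairs (indicator, projection) generating the graph submodule. -/
def genPair : ↥𝒟 → (V → ℤ) × S := fun A => (indZ (A : Set V), p (A : Set V))

/-- The "graph submodule" of pairs. -/
def Wmod : Submodule ℤ ((V → ℤ) × S) := Submodule.span ℤ (Set.range (genPair 𝒟 p))

lemma genPair_mem (A : ↥𝒟) : genPair 𝒟 p A ∈ Wmod 𝒟 p :=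
  Submodule.subset_span ⟨A, rfl⟩

variable {𝒟 p}
variable (h0 : ∅ ∈ 𝒟)
    (hIc : ∀ A ∈ 𝒟, ∀ B ∈ 𝒟, A ∩ B ∈ 𝒟)
    (hUc : ∀ A ∈ 𝒟, ∀ B ∈ 𝒟, A ∪ B ∈ 𝒟)
    (hp0 : p ∅ = 0)
    (hpM : ∀ A ∈ 𝒟, ∀ B ∈ 𝒟, p A * p B = p (A ∩ B))
    (hpU : ∀ A ∈ 𝒟, ∀ B ∈ 𝒟, p (A ∪ B) = p A + p B - p (A ∩ B))

include hIc hpM in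
lemma mul_mem_W : ∀ x ∈ Wmod 𝒟 p, ∀ y ∈ Wmod 𝒟 p, x * y ∈ Wmod 𝒟 p := by
  intro x hx
  induction hx using Submodule.span_induction with
  | mem x hxg =>
    intro y hy
    induction hy using Submodule.span_induction with
    | mem y hyg =>
      obtain ⟨A, rfl⟩ := hxg
      obtain ⟨B, rfl⟩ := hyg
      have : genPair 𝒟 p A * genPair 𝒟 p B =
          genPair 𝒟 p ⟨(A : Set V) ∩ (B : Set V), hIc _ A.2 _ B.2⟩ := by
        simp only [genPair, Prod.mk_mul_mk]
        exact Prod.ext (indZ_mul _ _) (hpM _ A.2 _ B.2)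
      rw [this]
      exact genPair_mem _ _ _
    | zero => simpa using Submodule.zero_mem _
    | add y z _ _ hy hz => rw [mul_add]; exact Submodule.add_mem _ hy hz
    | smul n y _ hy => rw [mul_smul_comm]; exact Submodule.smul_mem _ _ hy
  | zero => intro y hy; simpa using Submodule.zero_mem _
  | add x z _ _ hx hz => intro y hy; rw [add_mul]; exact Submodule.add_mem _ (hx y hy) (hz y hy)
  | smul n x _ hx => intro y hy; rw [smul_mul_assoc]; exact Submodule.smul_mem _ _ (hx y hy)

include hIc hpM in
lemma prod_inter (U : Finset ↥𝒟) (hU : U.Nonempty) :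
    (⋂ i ∈ U, (i : Set V)) ∈ 𝒟 ∧ (∏ i ∈ U, p (i : Set V)) = p (⋂ i ∈ U, (i : Set V)) := by
  classical
  induction hU using Finset.Nonempty.cons_induction with
  | singleton a => simp [a.2]
  | cons a s ha hs ih =>
    rw [Finset.prod_cons]
    have hset : (⋂ i ∈ Finset.cons a s ha, (i : Set V)) = (a : Set V) ∩ ⋂ i ∈ s, (i : Set V) := by
      simp [Set.iInter_iInter_eq_or_left]
    rw [hset, ih.2]
    exact ⟨hIc _ a.2 _ ih.1, hpM _ a.2 _ ih.1⟩

include hUc in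
lemma union_mem (T : Finset ↥𝒟) (hT : T.Nonempty) :
    (⋃ i ∈ T, (i : Set V)) ∈ 𝒟 := by
  classical
  induction hT using Finset.Nonempty.cons_induction with
  | singleton a => simpa using a.2
  | cons a s ha hs ih =>
    have hset : (⋃ i ∈ Finset.cons a s ha, (i : Set V)) = (a : Set V) ∪ ⋃ i ∈ s, (i : Set V) := by
      simp [Set.iUnion_iUnion_eq_or_left]
    rw [hset]
    exact hUc _ a.2 _ ih

include h0 hIc hUc hp0 hpM hpU in
lemma vanish (T : Finset ↥𝒟) :
    ∀ I ∈ 𝒟, I ⊆ (⋃ i ∈ T, (i : Set V)) →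
      p I * ∏ i ∈ T, (1 - p (i : Set V)) = 0 := by
  classical
  induction T using Finset.induction_on with
  | empty =>
    intro I hI hsub
    simp only [Finset.notMem_empty, Set.iUnion_of_empty, Set.iUnion_empty,
      Set.subset_empty_iff] at hsub
    subst hsub
    simp [hp0]
  | @insert B₀ T hB ih =>
    intro I hI hsub
    have hsub' : I ⊆ (B₀ : Set V) ∪ ⋃ i ∈ T, (i : Set V) := by
      intro v hv
      have := hsub hv
      simpa [Set.iUnion_iUnion_eq_or_left] using this
    rw [Finset.prod_insert hB]
    by_cases hT : T = ∅
    · subst hT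
      simp only [Finset.prod_empty, mul_one]
      have hIB : I ⊆ (B₀ : Set V) := by simpa using hsub'
      have : p I * (1 - p (B₀ : Set V)) = p I - p (I ∩ (B₀ : Set V)) := by
        rw [mul_sub, mul_one, hpM _ hI _ B₀.2]
      rw [this, Set.inter_eq_left.mpr hIB, sub_self]
    · have hTne : T.Nonempty := Finset.nonempty_of_ne_empty hT
      set U : Set V := ⋃ i ∈ T, (i : Set V) with hUdef
      have hUmem : U ∈ 𝒟 := union_mem hUc T hTne
      set X : Set V := I ∩ (B₀ : Set V) with hX
      set Y : Set V := I ∩ U with hY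
      have hXmem : X ∈ 𝒟 := hIc _ hI _ B₀.2
      have hYmem : Y ∈ 𝒟 := hIc _ hI _ hUmem
      have hXY : X ∪ Y = I := by
        rw [hX, hY, ← Set.inter_union_distrib_left]
        exact Set.inter_eq_left.mpr hsub'
      have hrel : p I - p X = p Y - p (X ∩ Y) := by
        have := hpU _ hXmem _ hYmem
        rw [hXY] at this
        linear_combination this
      have hstep : p I * ((1 - p (B₀ : Set V)) * ∏ i ∈ T, (1 - p (i : Set V))) =
          (p Y - p (X ∩ Y)) * ∏ i ∈ T, (1 - p (i : Set V)) := by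
        rw [← hrel]
        have : p I * (1 - p (B₀ : Set V)) = p I - p X := by
          rw [mul_sub, mul_one, hpM _ hI _ B₀.2]
        rw [← mul_assoc, this]
      rw [hstep, sub_mul]
      have h1 : p Y * ∏ i ∈ T, (1 - p (i : Set V)) = 0 :=
        ih _ hYmem (by rw [hY]; exact Set.inter_subset_right)
      have h2 : p (X ∩ Y) * ∏ i ∈ T, (1 - p (i : Set V)) = 0 :=
        ih _ (hIc _ hXmem _ hYmem)
          (fun v hv => hv.2.2)
      rw [h1, h2, sub_zero]

include h0 hIc hUc hp0 hpM hpU in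
lemma key_zero (c : ↥𝒟 →₀ ℤ)
    (hc : ∑ i ∈ c.support, c i • indZ (i : Set V) = 0) :
    ∑ i ∈ c.support, c i • p (i : Set V) = 0 := by
  classical
  set t := c.support with ht
  have hpoint : ∀ v : V, ∑ i ∈ t, c i * indZ (i : Set V) v = 0 := by
    intro v
    have := congrFun hc v
    simpa [Finset.sum_apply, Pi.smul_apply, smul_eq_mul] using this
  set q : Finset ↥𝒟 → S :=
    fun U => (∏ i ∈ U, p (i : Set V)) * ∏ i ∈ t \ U, (1 - p (i : Set V)) with hq
  -- splitting of each projection into atoms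
  have hsplit : ∀ i ∈ t, p (i : Set V) =
      ∑ U ∈ t.powerset.filter (fun U => i ∈ U), q U := by
    intro i hi
    have hbij : ∑ U ∈ t.powerset.filter (fun U => i ∈ U), q U =
        ∑ U' ∈ (t.erase i).powerset, q (insert i U') := by
      apply Finset.sum_nbij' (fun U => U.erase i) (fun U' => insert i U')
      · intro U hU
        simp only [Finset.mem_filter, Finset.mem_powerset] at hU
        simp only [Finset.mem_powerset]
        exact Finset.erase_subset_erase i hU.1
      · intro U' hU'
        simp only [Finset.mem_powerset] at hU'
        simp only [Finset.mem_filter, Finset.mem_powerset]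
        refine ⟨Finset.insert_subset hi (hU'.trans (Finset.erase_subset _ _)), Finset.mem_insert_self _ _⟩
      · intro U hU
        simp only [Finset.mem_filter, Finset.mem_powerset] at hU
        exact Finset.insert_erase hU.2
      · intro U' hU'
        simp only [Finset.mem_powerset] at hU'
        exact Finset.erase_insert (fun h => (Finset.notMem_erase i t) (hU' h))
      · intro U hU
        simp only [Finset.mem_filter, Finset.mem_powerset] at hU
        rw [Finset.insert_erase hU.2]
    rw [hbij]
    have hqins : ∀ U' ∈ (t.erase i).powerset,
        q (insert i U') = p (i : Set V) *
          ((∏ j ∈ U', p (j : Set V)) * ∏ j ∈ (t.erase i) \ U', (1 - p (j : Set V))) := by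
      intro U' hU'
      simp only [Finset.mem_powerset] at hU'
      have hiU' : i ∉ U' := fun h => (Finset.notMem_erase i t) (hU' h)
      have hsd : t \ insert i U' = (t.erase i) \ U' := by
        ext j
        simp only [Finset.mem_sdiff, Finset.mem_insert, Finset.mem_erase]
        tauto
      rw [hq]
      simp only
      rw [Finset.prod_insert hiU', hsd, mul_assoc]
    rw [Finset.sum_congr rfl hqins, ← Finset.mul_sum]
    have : ∑ U' ∈ (t.erase i).powerset,
        (∏ j ∈ U', p (j : Set V)) * ∏ j ∈ (t.erase i) \ U', (1 - p (j : Set V)) = 1 := by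
      rw [← Finset.prod_add]
      simp
    rw [this, mul_one]
  -- main computation
  have step1 : ∑ i ∈ t, c i • p (i : Set V)
      = ∑ U ∈ t.powerset, ∑ i ∈ t, (if i ∈ U then c i • q U else 0) := by
    rw [← Finset.sum_comm]
    refine Finset.sum_congr rfl fun i hi => ?_
    rw [hsplit i hi, Finset.smul_sum, Finset.sum_filter]
  have step2 : ∀ U ∈ t.powerset,
      (∑ i ∈ t, if i ∈ U then c i • q U else 0) = (∑ i ∈ U, c i) • q U := by
    intro U hU
    simp only [Finset.mem_powerset] at hU
    rw [← Finset.sum_filter, Finset.filter_mem_eq_inter,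
      Finset.inter_eq_right.mpr hU, Finset.sum_smul]
  rw [step1, Finset.sum_congr rfl step2]
  -- each atom term vanishes
  apply Finset.sum_eq_zero
  intro U hU
  simp only [Finset.mem_powerset] at hU
  by_cases hm : (∑ i ∈ U, c i) = 0
  · rw [hm, zero_smul]
  · have hUne : U.Nonempty := by
      rcases Finset.eq_empty_or_nonempty U with h | h
      · exact absurd (by simp [h]) hm
      · exact h
    have hPI := prod_inter hIc hpM U hUne
    set I : Set V := ⋂ i ∈ U, (i : Set V) with hIdef
    -- I is covered by the sets outside U
    have hcov : I ⊆ ⋃ i ∈ t \ U, (i : Set V) := by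
      intro v hv
      by_contra hvn
      have hvals : ∀ i ∈ t, c i * indZ (i : Set V) v = if i ∈ U then c i else 0 := by
        intro i hi
        by_cases hiU : i ∈ U
        · have : v ∈ (i : Set V) := by
            have := Set.mem_iInter₂.mp hv i hiU
            exact this
          simp [indZ, Set.indicator_of_mem this, hiU]
        · have hvi : v ∉ (i : Set V) := by
            intro hvi
            exact hvn (Set.mem_biUnion (Finset.mem_sdiff.mpr ⟨hi, hiU⟩) hvi)
          simp [indZ, Set.indicator_of_notMem hvi, hiU]
      have := hpoint v
      rw [Finset.sum_congr rfl hvals, Finset.sum_ite_mem, Finset.inter_eq_right.mpr hU] at this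
      exact hm this
    have hqU : q U = 0 := by
      rw [hq]
      simp only
      rw [hPI.2]
      exact vanish h0 hIc hUc hp0 hpM hpU (t \ U) I hPI.1 hcov
    rw [hqU, smul_zero]

include h0 hIc hUc hp0 hpM hpU in
lemma key_snd_eq {x : V → ℤ} {y y' : S}
    (h : (x, y) ∈ Wmod 𝒟 p) (h' : (x, y') ∈ Wmod 𝒟 p) : y = y' := by
  classical
  have hsub : ((0 : V → ℤ), y - y') ∈ Wmod 𝒟 p := by
    have := Submodule.sub_mem _ h h'
    simpa using this
  have hy : y - y' = 0 := by
    rw [Wmod, Finsupp.mem_span_range_iff_exists_finsupp] at hsub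
    obtain ⟨c, hc⟩ := hsub
    rw [Finsupp.sum] at hc
    have hfst : ∑ i ∈ c.support, c i • indZ (i : Set V) = 0 := by
      have := congrArg Prod.fst hc
      rw [Prod.fst_sum] at this
      simpa [genPair] using this
    have hsnd : ∑ i ∈ c.support, c i • p (i : Set V) = y - y' := by
      have := congrArg Prod.snd hc
      rw [Prod.snd_sum] at this
      simpa [genPair] using this
    rw [← hsnd]
    exact key_zero h0 hIc hUc hp0 hpM hpU c hfst
  exact sub_eq_zero.mp hy

end UltragraphKey

end KeyUltragraph



/-- An ultragraph: countable sets of vertices and edges, a source map `src : E → V`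
and a range map `rng : E → P(V) \ {∅}`. -/
structure Ultragraph (V : Type*) (E : Type*) where
  src : E → V
  rng : E → Set V
  rng_nonempty : ∀ e, (rng e).Nonempty

namespace Ultragraph

variable {V : Type*} {E : Type*}

/-- `𝒢⁰`: the smallest family of subsets of `V` containing `∅`, all singletons, all
ranges of edges, and closed under finite unions and finite intersections. -/
inductive GZero (G : Ultragraph V E) : Set V → Prop
  | empty : GZero G ∅
  | singleton (v : V) : GZero G {v}
  | range (e : E) : GZero G (G.rng e)
  | union {A B : Set V} : GZero G A → GZero G B → GZero G (A ∪ B)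
  | inter {A B : Set V} : GZero G A → GZero G B → GZero G (A ∩ B)

/-- The accommodating family `ℬ`: the smallest family of subsets of `V` containing `𝒢⁰`
and closed under finite unions, finite intersections and relative complements. -/
inductive AccFam (G : Ultragraph V E) : Set V → Prop
  | base {A : Set V} : G.GZero A → AccFam G A
  | union {A B : Set V} : AccFam G A → AccFam G B → AccFam G (A ∪ B)
  | inter {A B : Set V} : AccFam G A → AccFam G B → AccFam G (A ∩ B)
  | diff {A B : Set V} : AccFam G A → AccFam G B → AccFam G (A \ B)

/-- A finite path: a list of edges with `src (α (i+1)) ∈ rng (α i)`. -/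
def IsPath (G : Ultragraph V E) (α : List E) : Prop :=
  α.Chain' fun e f => G.src f ∈ G.rng e

/-- The range of a finite path: the range of its last edge; for the empty path it is
the whole vertex set. -/
def pathRange (G : Ultragraph V E) (α : List E) : Set V :=
  α.getLast?.elim Set.univ G.rng

/-- The set of sinks: vertices emitting no edge. -/
def sinks (G : Ultragraph V E) : Set V := {v | ∀ e, G.src e ≠ v}

/-- A loop: a nonempty finite path `λ` with `s(λ₁) ∈ r(λ)`. -/
def IsLoop (G : Ultragraph V E) (lam : List E) : Prop :=
  G.IsPath lam ∧ ∃ e, lam.head? = some e ∧ G.src e ∈ G.pathRange lam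

/-- A loop has an exit if there is an edge `e` with `s(e) ∈ r(λᵢ)` and `e ≠ λ_{i+1}`
(indices cyclic), or a sink `w ∈ r(λᵢ)`, for some `i`. -/
def HasExit (G : Ultragraph V E) (lam : List E) : Prop :=
  (∃ (i : Fin lam.length) (e : E),
      G.src e ∈ G.rng (lam.get i) ∧
        e ≠ lam.get ⟨(i.val + 1) % lam.length, Nat.mod_lt _ i.pos⟩) ∨
    ∃ (i : Fin lam.length), ∃ w ∈ G.sinks, w ∈ G.rng (lam.get i)

end Ultragraph

variable {V : Type*} {E : Type*}

/-- Generators of the ultragraph Leavitt path algebra `L_R(𝒢)`: an edge `s_e`, a ghost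
edge `s_e*`, or a projection `p_A` with `A ∈ 𝒢⁰`. -/
inductive LGen (G : Ultragraph V E) : Type _
  | edge : E → LGen G
  | ghost : E → LGen G
  | proj : {A : Set V // G.GZero A} → LGen G

open FreeAlgebra in
/-- The defining relations of the ultragraph Leavitt path algebra `L_R(𝒢)`. -/
inductive LRel (G : Ultragraph V E) (R : Type*) [CommRing R] :
    FreeAlgebra R (LGen G) → FreeAlgebra R (LGen G) → Prop
  | projEmpty : LRel G R (ι R (LGen.proj ⟨∅, Ultragraph.GZero.empty⟩)) 0
  | projInter (A B : {A : Set V // G.GZero A}) :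
      LRel G R (ι R (LGen.proj A) * ι R (LGen.proj B))
        (ι R (LGen.proj ⟨A.1 ∩ B.1, A.2.inter B.2⟩))
  | projUnion (A B : {A : Set V // G.GZero A}) :
      LRel G R (ι R (LGen.proj ⟨A.1 ∪ B.1, A.2.union B.2⟩))
        (ι R (LGen.proj A) + ι R (LGen.proj B) -
          ι R (LGen.proj ⟨A.1 ∩ B.1, A.2.inter B.2⟩))
  | srcEdge (e : E) :
      LRel G R (ι R (LGen.proj ⟨{G.src e}, Ultragraph.GZero.singleton _⟩) * ι R (LGen.edge e))
        (ι R (LGen.edge e))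
  | edgeRng (e : E) :
      LRel G R (ι R (LGen.edge e) * ι R (LGen.proj ⟨G.rng e, Ultragraph.GZero.range e⟩))
        (ι R (LGen.edge e))
  | rngGhost (e : E) :
      LRel G R (ι R (LGen.proj ⟨G.rng e, Ultragraph.GZero.range e⟩) * ι R (LGen.ghost e))
        (ι R (LGen.ghost e))
  | ghostSrc (e : E) :
      LRel G R (ι R (LGen.ghost e) * ι R (LGen.proj ⟨{G.src e}, Ultragraph.GZero.singleton _⟩))
        (ι R (LGen.ghost e))
  | ghostEdgeSame (e : E) :
      LRel G R (ι R (LGen.ghost e) * ι R (LGen.edge e))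
        (ι R (LGen.proj ⟨G.rng e, Ultragraph.GZero.range e⟩))
  | ghostEdgeDiff (e f : E) (h : e ≠ f) :
      LRel G R (ι R (LGen.ghost e) * ι R (LGen.edge f)) 0
  | ck (v : V) (h1 : {e | G.src e = v}.Finite) (h2 : {e | G.src e = v}.Nonempty) :
      LRel G R (ι R (LGen.proj ⟨{v}, Ultragraph.GZero.singleton v⟩))
        (∑ e ∈ h1.toFinset, ι R (LGen.edge e) * ι R (LGen.ghost e))

/-- The (unital hull of the) ultragraph Leavitt path algebra `L_R(𝒢)`, as a quotient of
the free algebra on the generators by the defining relations. -/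
def LeavittAlg (G : Ultragraph V E) (R : Type*) [CommRing R] : Type _ :=
  RingQuot (LRel G R)

noncomputable instance (G : Ultragraph V E) (R : Type*) [CommRing R] :
    Ring (LeavittAlg G R) :=
  inferInstanceAs (Ring (RingQuot (LRel G R)))

noncomputable instance (G : Ultragraph V E) (R : Type*) [CommRing R] :
    Algebra R (LeavittAlg G R) :=
  inferInstanceAs (Algebra R (RingQuot (LRel G R)))

variable (G : Ultragraph V E) (R : Type*) [CommRing R]

/-- The generator `s_e` of `L_R(𝒢)`. -/
noncomputable def eGen (e : E) : LeavittAlg G R :=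
  RingQuot.mkAlgHom R (LRel G R) (FreeAlgebra.ι R (LGen.edge e))

/-- The generator `s_e*` of `L_R(𝒢)`. -/
noncomputable def gGen (e : E) : LeavittAlg G R :=
  RingQuot.mkAlgHom R (LRel G R) (FreeAlgebra.ι R (LGen.ghost e))

/-- The generator `p_A` of `L_R(𝒢)`, for `A ∈ 𝒢⁰`. -/
noncomputable def pGen (A : {A : Set V // G.GZero A}) : LeavittAlg G R :=
  RingQuot.mkAlgHom R (LRel G R) (FreeAlgebra.ι R (LGen.proj A))

/-- `s_α` for a finite path `α` (equal to `1` for the empty path, so that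
`s_ε p_A s_ε* = p_A`). -/
noncomputable def sPath (α : List E) : LeavittAlg G R :=
  (α.map (eGen G R)).prod

/-- `s_α*` for a finite path `α`. -/
noncomputable def gPath (α : List E) : LeavittAlg G R :=
  (α.reverse.map (gGen G R)).prod

/-- The generating set `{s_e, s_e*, p_A}` of `L_R(𝒢)`. -/
def lGens : Set (LeavittAlg G R) :=
  {x | (∃ e : E, x = eGen G R e) ∨ (∃ e : E, x = gGen G R e) ∨
    ∃ A : {A : Set V // G.GZero A}, x = pGen G R A}

/-- The ultragraph Leavitt path algebra `L_R(𝒢)` as a non-unital algebra: the non-unital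
subalgebra generated by the `s_e`, `s_e*` and `p_A`. -/
noncomputable def leavittSubalg : NonUnitalSubalgebra R (LeavittAlg G R) :=
  NonUnitalAlgebra.adjoin R (lGens G R)

/-- The generators `s_α p_A s_α*` of the diagonal subalgebra `D(L_R(𝒢))`. -/
def diagGens : Set (LeavittAlg G R) :=
  {x | ∃ (α : List E) (A : Set V) (hA : G.GZero A),
    G.IsPath α ∧ (A ∩ G.pathRange α).Nonempty ∧
      x = sPath G R α * pGen G R ⟨A, hA⟩ * gPath G R α}

/-- The diagonal subalgebra `D(L_R(𝒢))`. -/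
noncomputable def diagSubalg : NonUnitalSubalgebra R (LeavittAlg G R) :=
  NonUnitalAlgebra.adjoin R (diagGens G R)

/-- The generators `s_α p_A s_β*` of the abelian core `M(L_R(𝒢))`: `α = β`, or
`α = βλ`, or `β = αλ`, with `λ` a loop without exits. -/
def coreGens : Set (LeavittAlg G R) :=
  {x | ∃ (α β : List E) (A : Set V) (hA : G.GZero A),
    G.IsPath α ∧ G.IsPath β ∧
      (G.pathRange α ∩ A ∩ G.pathRange β).Nonempty ∧
      (α = β ∨ (∃ lam, G.IsLoop lam ∧ ¬G.HasExit lam ∧ α = β ++ lam) ∨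
        (∃ lam, G.IsLoop lam ∧ ¬G.HasExit lam ∧ β = α ++ lam)) ∧
      x = sPath G R α * pGen G R ⟨A, hA⟩ * gPath G R β}

/-- The abelian core `M(L_R(𝒢))`. -/
noncomputable def coreSubalg : NonUnitalSubalgebra R (LeavittAlg G R) :=
  NonUnitalAlgebra.adjoin R (coreGens G R)

/-- Generators of the ultragraph Leavitt path algebra `L_R(𝒢_r)`: as for `L_R(𝒢)`, but
with projections `p_A` indexed by all `A` in the accommodating family `ℬ`. -/
inductive LGenR (G : Ultragraph V E) : Type _
  | edge : E → LGenR G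
  | ghost : E → LGenR G
  | proj : {A : Set V // G.AccFam A} → LGenR G

open FreeAlgebra in
/-- The defining relations of `L_R(𝒢_r)`. -/
inductive LRelR (G : Ultragraph V E) (R : Type*) [CommRing R] :
    FreeAlgebra R (LGenR G) → FreeAlgebra R (LGenR G) → Prop
  | projEmpty :
      LRelR G R (ι R (LGenR.proj ⟨∅, Ultragraph.AccFam.base Ultragraph.GZero.empty⟩)) 0
  | projInter (A B : {A : Set V // G.AccFam A}) :
      LRelR G R (ι R (LGenR.proj A) * ι R (LGenR.proj B))
        (ι R (LGenR.proj ⟨A.1 ∩ B.1, A.2.inter B.2⟩))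
  | projUnion (A B : {A : Set V // G.AccFam A}) :
      LRelR G R (ι R (LGenR.proj ⟨A.1 ∪ B.1, A.2.union B.2⟩))
        (ι R (LGenR.proj A) + ι R (LGenR.proj B) -
          ι R (LGenR.proj ⟨A.1 ∩ B.1, A.2.inter B.2⟩))
  | srcEdge (e : E) :
      LRelR G R (ι R (LGenR.proj ⟨{G.src e},
          Ultragraph.AccFam.base (Ultragraph.GZero.singleton _)⟩) * ι R (LGenR.edge e))
        (ι R (LGenR.edge e))
  | edgeRng (e : E) :
      LRelR G R (ι R (LGenR.edge e) * ι R (LGenR.proj ⟨G.rng e,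
          Ultragraph.AccFam.base (Ultragraph.GZero.range e)⟩))
        (ι R (LGenR.edge e))
  | rngGhost (e : E) :
      LRelR G R (ι R (LGenR.proj ⟨G.rng e,
          Ultragraph.AccFam.base (Ultragraph.GZero.range e)⟩) * ι R (LGenR.ghost e))
        (ι R (LGenR.ghost e))
  | ghostSrc (e : E) :
      LRelR G R (ι R (LGenR.ghost e) * ι R (LGenR.proj ⟨{G.src e},
          Ultragraph.AccFam.base (Ultragraph.GZero.singleton _)⟩))
        (ι R (LGenR.ghost e))
  | ghostEdgeSame (e : E) :
      LRelR G R (ι R (LGenR.ghost e) * ι R (LGenR.edge e))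
        (ι R (LGenR.proj ⟨G.rng e, Ultragraph.AccFam.base (Ultragraph.GZero.range e)⟩))
  | ghostEdgeDiff (e f : E) (h : e ≠ f) :
      LRelR G R (ι R (LGenR.ghost e) * ι R (LGenR.edge f)) 0
  | ck (v : V) (h1 : {e | G.src e = v}.Finite) (h2 : {e | G.src e = v}.Nonempty) :
      LRelR G R (ι R (LGenR.proj ⟨{v},
          Ultragraph.AccFam.base (Ultragraph.GZero.singleton v)⟩))
        (∑ e ∈ h1.toFinset, ι R (LGenR.edge e) * ι R (LGenR.ghost e))

/-- The (unital hull of the) ultragraph Leavitt path algebra `L_R(𝒢_r)`. -/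
def LeavittAlgR (G : Ultragraph V E) (R : Type*) [CommRing R] : Type _ :=
  RingQuot (LRelR G R)

noncomputable instance (G : Ultragraph V E) (R : Type*) [CommRing R] :
    Ring (LeavittAlgR G R) :=
  inferInstanceAs (Ring (RingQuot (LRelR G R)))

noncomputable instance (G : Ultragraph V E) (R : Type*) [CommRing R] :
    Algebra R (LeavittAlgR G R) :=
  inferInstanceAs (Algebra R (RingQuot (LRelR G R)))

/-- The generator `s_e` of `L_R(𝒢_r)`. -/
noncomputable def eGenR (e : E) : LeavittAlgR G R :=
  RingQuot.mkAlgHom R (LRelR G R) (FreeAlgebra.ι R (LGenR.edge e))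

/-- The generator `s_e*` of `L_R(𝒢_r)`. -/
noncomputable def gGenR (e : E) : LeavittAlgR G R :=
  RingQuot.mkAlgHom R (LRelR G R) (FreeAlgebra.ι R (LGenR.ghost e))

/-- The generator `p_A` of `L_R(𝒢_r)`, for `A ∈ ℬ`. -/
noncomputable def pGenR (A : {A : Set V // G.AccFam A}) : LeavittAlgR G R :=
  RingQuot.mkAlgHom R (LRelR G R) (FreeAlgebra.ι R (LGenR.proj A))


noncomputable section IsoConstruction

open UltragraphKey

-- ### Basic relations in `L_R(𝒢)`

lemma pGen_mul (A B : {A : Set V // G.GZero A}) :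
    pGen G R A * pGen G R B = pGen G R ⟨A.1 ∩ B.1, A.2.inter B.2⟩ := by
  have := RingQuot.mkAlgHom_rel R (LRel.projInter (G := G) (R := R) A B)
  simp only [map_mul, map_add, map_sub, map_zero, map_sum] at this
  exact this

lemma pGen_union (A B : {A : Set V // G.GZero A}) :
    pGen G R ⟨A.1 ∪ B.1, A.2.union B.2⟩ =
      pGen G R A + pGen G R B - pGen G R ⟨A.1 ∩ B.1, A.2.inter B.2⟩ := by
  have := RingQuot.mkAlgHom_rel R (LRel.projUnion (G := G) (R := R) A B)
  simp only [map_mul, map_add, map_sub, map_zero, map_sum] at this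
  exact this

lemma pGen_empty : pGen G R ⟨∅, Ultragraph.GZero.empty⟩ = 0 := by
  have := RingQuot.mkAlgHom_rel R (LRel.projEmpty (G := G) (R := R))
  simp only [map_mul, map_add, map_sub, map_zero, map_sum] at this
  exact this

lemma pGenR_mul (A B : {A : Set V // G.AccFam A}) :
    pGenR G R A * pGenR G R B = pGenR G R ⟨A.1 ∩ B.1, A.2.inter B.2⟩ := by
  have := RingQuot.mkAlgHom_rel R (LRelR.projInter (G := G) (R := R) A B)
  simp only [map_mul, map_add, map_sub, map_zero, map_sum] at this
  exact this

lemma pGenR_union (A B : {A : Set V // G.AccFam A}) :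
    pGenR G R ⟨A.1 ∪ B.1, A.2.union B.2⟩ =
      pGenR G R A + pGenR G R B - pGenR G R ⟨A.1 ∩ B.1, A.2.inter B.2⟩ := by
  have := RingQuot.mkAlgHom_rel R (LRelR.projUnion (G := G) (R := R) A B)
  simp only [map_mul, map_add, map_sub, map_zero, map_sum] at this
  exact this

lemma pGenR_empty :
    pGenR G R ⟨∅, Ultragraph.AccFam.base Ultragraph.GZero.empty⟩ = 0 := by
  have := RingQuot.mkAlgHom_rel R (LRelR.projEmpty (G := G) (R := R))
  simp only [map_mul, map_add, map_sub, map_zero, map_sum] at this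
  exact this

-- ### Commutative subrings of projections

/-- The set of projections in `L_R(𝒢)`. -/
def pFam : Set (LeavittAlg G R) :=
  Set.range fun A : {A : Set V // G.GZero A} => pGen G R A

/-- The set of projections in `L_R(𝒢_r)`. -/
def pFamR : Set (LeavittAlgR G R) :=
  Set.range fun A : {A : Set V // G.AccFam A} => pGenR G R A

noncomputable instance : CommRing (Algebra.adjoin ℤ (pFam G R)) :=
  Algebra.adjoinCommRingOfComm ℤ (by
    rintro _ ⟨A, rfl⟩ _ ⟨B, rfl⟩
    rw [pGen_mul, pGen_mul]
    exact congrArg _ (Subtype.ext (Set.inter_comm _ _)))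

noncomputable instance : CommRing (Algebra.adjoin ℤ (pFamR G R)) :=
  Algebra.adjoinCommRingOfComm ℤ (by
    rintro _ ⟨A, rfl⟩ _ ⟨B, rfl⟩
    rw [pGenR_mul, pGenR_mul]
    exact congrArg _ (Subtype.ext (Set.inter_comm _ _)))

/-- The family `𝒢⁰` as a set of sets. -/
def DG : Set (Set V) := {A : Set V | G.GZero A}

/-- The accommodating family `ℬ` as a set of sets. -/
def DR : Set (Set V) := {A : Set V | G.AccFam A}

open Classical in
/-- The projections valued in the commutative subring, `L_R(𝒢)` version. -/
def pT : Set V → Algebra.adjoin ℤ (pFam G R) := fun A =>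
  if h : G.GZero A then
    ⟨pGen G R ⟨A, h⟩, Algebra.subset_adjoin ⟨⟨A, h⟩, rfl⟩⟩ else 0

open Classical in
/-- The projections valued in the commutative subring, `L_R(𝒢_r)` version. -/
def pTR : Set V → Algebra.adjoin ℤ (pFamR G R) := fun A =>
  if h : G.AccFam A then
    ⟨pGenR G R ⟨A, h⟩, Algebra.subset_adjoin ⟨⟨A, h⟩, rfl⟩⟩ else 0

lemma mem_DG {A : Set V} (h : G.GZero A) : A ∈ DG G := h
lemma mem_DR {A : Set V} (h : G.AccFam A) : A ∈ DR G := h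

lemma DG_empty : ∅ ∈ DG G := Ultragraph.GZero.empty
lemma DG_inter : ∀ A ∈ DG G, ∀ B ∈ DG G, A ∩ B ∈ DG G := fun _ hA _ hB => hA.inter hB
lemma DG_union : ∀ A ∈ DG G, ∀ B ∈ DG G, A ∪ B ∈ DG G := fun _ hA _ hB => hA.union hB
lemma DR_empty : ∅ ∈ DR G := Ultragraph.AccFam.base Ultragraph.GZero.empty
lemma DR_inter : ∀ A ∈ DR G, ∀ B ∈ DR G, A ∩ B ∈ DR G := fun _ hA _ hB => hA.inter hB
lemma DR_union : ∀ A ∈ DR G, ∀ B ∈ DR G, A ∪ B ∈ DR G := fun _ hA _ hB => hA.union hB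

lemma pT_empty : pT G R ∅ = 0 := by
  simp only [pT]
  rw [dif_pos Ultragraph.GZero.empty]
  exact Subtype.ext (pGen_empty G R)

lemma pT_mul : ∀ A ∈ DG G, ∀ B ∈ DG G, pT G R A * pT G R B = pT G R (A ∩ B) := by
  intro A hA B hB
  have hA' : G.GZero A := hA
  have hB' : G.GZero B := hB
  simp only [pT]
  rw [dif_pos hA', dif_pos hB', dif_pos (hA'.inter hB')]
  exact Subtype.ext (pGen_mul G R ⟨A, hA'⟩ ⟨B, hB'⟩)

lemma pT_union : ∀ A ∈ DG G, ∀ B ∈ DG G,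
    pT G R (A ∪ B) = pT G R A + pT G R B - pT G R (A ∩ B) := by
  intro A hA B hB
  have hA' : G.GZero A := hA
  have hB' : G.GZero B := hB
  simp only [pT]
  rw [dif_pos hA', dif_pos hB', dif_pos (hA'.inter hB'), dif_pos (hA'.union hB')]
  exact Subtype.ext (pGen_union G R ⟨A, hA'⟩ ⟨B, hB'⟩)

lemma pTR_empty : pTR G R ∅ = 0 := by
  simp only [pTR]
  rw [dif_pos (Ultragraph.AccFam.base Ultragraph.GZero.empty : G.AccFam ∅)]
  exact Subtype.ext (pGenR_empty G R)

lemma pTR_mul : ∀ A ∈ DR G, ∀ B ∈ DR G, pTR G R A * pTR G R B = pTR G R (A ∩ B) := by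
  intro A hA B hB
  have hA' : G.AccFam A := hA
  have hB' : G.AccFam B := hB
  simp only [pTR]
  rw [dif_pos hA', dif_pos hB', dif_pos (hA'.inter hB')]
  exact Subtype.ext (pGenR_mul G R ⟨A, hA'⟩ ⟨B, hB'⟩)

lemma pTR_union : ∀ A ∈ DR G, ∀ B ∈ DR G,
    pTR G R (A ∪ B) = pTR G R A + pTR G R B - pTR G R (A ∩ B) := by
  intro A hA B hB
  have hA' : G.AccFam A := hA
  have hB' : G.AccFam B := hB
  simp only [pTR]
  rw [dif_pos hA', dif_pos hB', dif_pos (hA'.inter hB'), dif_pos (hA'.union hB')]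
  exact Subtype.ext (pGenR_union G R ⟨A, hA'⟩ ⟨B, hB'⟩)

-- ### Existence of projections for all accommodating sets

lemma exists_rep : ∀ (A : Set V), G.AccFam A →
    ∃ y : Algebra.adjoin ℤ (pFam G R), (indZ A, y) ∈ Wmod (DG G) (pT G R) := by
  intro A hA
  induction hA with
  | base h =>
    rename_i A
    refine ⟨pT G R A, ?_⟩
    have := genPair_mem (DG G) (pT G R) ⟨A, mem_DG G h⟩
    simpa [genPair] using this
  | union hA hB ihA ihB =>
    rename_i A' B'
    obtain ⟨yA, hyA⟩ := ihA
    obtain ⟨yB, hyB⟩ := ihB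
    refine ⟨yA + yB - yA * yB, ?_⟩
    have hmul := mul_mem_W (DG_inter G) (pT_mul G R) _ hyA _ hyB
    have := Submodule.sub_mem _ (Submodule.add_mem _ hyA hyB) hmul
    have hfst : (indZ A' + indZ B' - indZ A' * indZ B' : V → ℤ) = indZ (A' ∪ B') := by
      rw [indZ_mul, ← indZ_union]
    simpa [Prod.mk_add_mk, Prod.mk_sub_mk, Prod.mk_mul_mk, hfst] using this
  | inter hA hB ihA ihB =>
    rename_i A' B'
    obtain ⟨yA, hyA⟩ := ihA
    obtain ⟨yB, hyB⟩ := ihB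
    refine ⟨yA * yB, ?_⟩
    have hmul := mul_mem_W (DG_inter G) (pT_mul G R) _ hyA _ hyB
    simpa [Prod.mk_mul_mk, indZ_mul] using hmul
  | diff hA hB ihA ihB =>
    rename_i A' B'
    obtain ⟨yA, hyA⟩ := ihA
    obtain ⟨yB, hyB⟩ := ihB
    refine ⟨yA - yA * yB, ?_⟩
    have hmul := mul_mem_W (DG_inter G) (pT_mul G R) _ hyA _ hyB
    have := Submodule.sub_mem _ hyA hmul
    have hfst : (indZ A' - indZ A' * indZ B' : V → ℤ) = indZ (A' \ B') := by
      rw [indZ_mul, ← indZ_diff]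
    simpa [Prod.mk_sub_mk, Prod.mk_mul_mk, hfst] using this

/-- The projection in `L_R(𝒢)` associated to a set of the accommodating family. -/
def phip (A : Set V) (hA : G.AccFam A) : Algebra.adjoin ℤ (pFam G R) :=
  (exists_rep G R A hA).choose

lemma phip_mem (A : Set V) (hA : G.AccFam A) :
    (indZ A, phip G R A hA) ∈ Wmod (DG G) (pT G R) :=
  (exists_rep G R A hA).choose_spec

lemma phip_eq {A : Set V} (hA : G.AccFam A) {y : Algebra.adjoin ℤ (pFam G R)}
    (h : (indZ A, y) ∈ Wmod (DG G) (pT G R)) : phip G R A hA = y :=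
  key_snd_eq (DG_empty G) (DG_inter G) (DG_union G) (pT_empty G R) (pT_mul G R)
    (pT_union G R) (phip_mem G R A hA) h

lemma phip_base (A : Set V) (h : G.GZero A) (hA : G.AccFam A) :
    (phip G R A hA : LeavittAlg G R) = pGen G R ⟨A, h⟩ := by
  have : phip G R A hA = pT G R A := by
    apply phip_eq
    have := genPair_mem (DG G) (pT G R) ⟨A, mem_DG G h⟩
    simpa [genPair] using this
  rw [this]
  simp only [pT]
  rw [dif_pos h]

lemma phip_inter (A B : Set V) (hA : G.AccFam A) (hB : G.AccFam B) :
    phip G R (A ∩ B) (hA.inter hB) = phip G R A hA * phip G R B hB := by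
  apply phip_eq
  have hmul := mul_mem_W (DG_inter G) (pT_mul G R) _ (phip_mem G R A hA) _ (phip_mem G R B hB)
  simpa [Prod.mk_mul_mk, indZ_mul] using hmul

lemma phip_union (A B : Set V) (hA : G.AccFam A) (hB : G.AccFam B) :
    phip G R (A ∪ B) (hA.union hB) =
      phip G R A hA + phip G R B hB - phip G R (A ∩ B) (hA.inter hB) := by
  apply phip_eq
  rw [phip_inter]
  have hmul := mul_mem_W (DG_inter G) (pT_mul G R) _ (phip_mem G R A hA) _ (phip_mem G R B hB)
  have := Submodule.sub_mem _ (Submodule.add_mem _ (phip_mem G R A hA) (phip_mem G R B hB)) hmul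
  have hfst : (indZ A + indZ B - indZ A * indZ B : V → ℤ) = indZ (A ∪ B) := by
    rw [indZ_mul, ← indZ_union]
  simpa [Prod.mk_add_mk, Prod.mk_sub_mk, Prod.mk_mul_mk, hfst] using this

lemma phip_empty (hA : G.AccFam ∅) : (phip G R ∅ hA : LeavittAlg G R) = 0 := by
  rw [phip_base G R ∅ Ultragraph.GZero.empty hA, pGen_empty]

-- ### The algebra map `L_R(𝒢_r) → L_R(𝒢)`

/-- Images of the generators. -/
def fGen : LGenR G → LeavittAlg G R
  | .edge e => eGen G R e
  | .ghost e => gGen G R e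
  | .proj A => (phip G R A.1 A.2 : LeavittAlg G R)

lemma fGen_rel : ∀ ⦃x y⦄, LRelR G R x y →
    FreeAlgebra.lift R (fGen G R) x = FreeAlgebra.lift R (fGen G R) y := by
  intro x y h
  induction h with
  | projEmpty =>
    simp only [FreeAlgebra.lift_ι_apply, map_zero, fGen]
    exact phip_empty G R _
  | projInter A B =>
    simp only [map_mul, FreeAlgebra.lift_ι_apply, fGen]
    rw [← Subalgebra.coe_mul, ← phip_inter]
  | projUnion A B =>
    simp only [map_mul, map_add, map_sub, FreeAlgebra.lift_ι_apply, fGen]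
    rw [← Subalgebra.coe_add, ← Subalgebra.coe_sub, phip_union G R A.1 B.1 A.2 B.2]
  | srcEdge e =>
    simp only [map_mul, FreeAlgebra.lift_ι_apply, fGen]
    rw [phip_base G R _ (Ultragraph.GZero.singleton _)]
    have := RingQuot.mkAlgHom_rel R (LRel.srcEdge (G := G) (R := R) e)
    simp only [map_mul, map_add, map_sub, map_zero, map_sum] at this
    exact this
  | edgeRng e =>
    simp only [map_mul, FreeAlgebra.lift_ι_apply, fGen]
    rw [phip_base G R _ (Ultragraph.GZero.range e)]
    have := RingQuot.mkAlgHom_rel R (LRel.edgeRng (G := G) (R := R) e)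
    simp only [map_mul, map_add, map_sub, map_zero, map_sum] at this
    exact this
  | rngGhost e =>
    simp only [map_mul, FreeAlgebra.lift_ι_apply, fGen]
    rw [phip_base G R _ (Ultragraph.GZero.range e)]
    have := RingQuot.mkAlgHom_rel R (LRel.rngGhost (G := G) (R := R) e)
    simp only [map_mul, map_add, map_sub, map_zero, map_sum] at this
    exact this
  | ghostSrc e =>
    simp only [map_mul, FreeAlgebra.lift_ι_apply, fGen]
    rw [phip_base G R _ (Ultragraph.GZero.singleton _)]
    have := RingQuot.mkAlgHom_rel R (LRel.ghostSrc (G := G) (R := R) e)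
    simp only [map_mul, map_add, map_sub, map_zero, map_sum] at this
    exact this
  | ghostEdgeSame e =>
    simp only [map_mul, FreeAlgebra.lift_ι_apply, fGen]
    rw [phip_base G R _ (Ultragraph.GZero.range e)]
    have := RingQuot.mkAlgHom_rel R (LRel.ghostEdgeSame (G := G) (R := R) e)
    simp only [map_mul, map_add, map_sub, map_zero, map_sum] at this
    exact this
  | ghostEdgeDiff e f hef =>
    simp only [map_mul, map_zero, FreeAlgebra.lift_ι_apply, fGen]
    have := RingQuot.mkAlgHom_rel R (LRel.ghostEdgeDiff (G := G) (R := R) e f hef)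
    simp only [map_mul, map_add, map_sub, map_zero, map_sum] at this
    exact this
  | ck v h1 h2 =>
    simp only [map_mul, map_sum, FreeAlgebra.lift_ι_apply, fGen]
    rw [phip_base G R _ (Ultragraph.GZero.singleton v)]
    have := RingQuot.mkAlgHom_rel R (LRel.ck (G := G) (R := R) v h1 h2)
    simp only [map_mul, map_add, map_sub, map_zero, map_sum] at this
    exact this

/-- The algebra map `L_R(𝒢_r) → L_R(𝒢)`. -/
def phiHom : LeavittAlgR G R →ₐ[R] LeavittAlg G R :=
  RingQuot.liftAlgHom R ⟨FreeAlgebra.lift R (fGen G R), fGen_rel G R⟩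

lemma phiHom_eGenR (e : E) : phiHom G R (eGenR G R e) = eGen G R e := by
  have h1 := RingQuot.liftAlgHom_mkAlgHom_apply (S := R)
    (FreeAlgebra.lift R (fGen G R)) (fGen_rel G R) (FreeAlgebra.ι R (LGenR.edge e))
  have h2 : FreeAlgebra.lift R (fGen G R) (FreeAlgebra.ι R (LGenR.edge e)) = eGen G R e :=
    FreeAlgebra.lift_ι_apply _ _
  exact h1.trans h2

lemma phiHom_gGenR (e : E) : phiHom G R (gGenR G R e) = gGen G R e := by
  have h1 := RingQuot.liftAlgHom_mkAlgHom_apply (S := R)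
    (FreeAlgebra.lift R (fGen G R)) (fGen_rel G R) (FreeAlgebra.ι R (LGenR.ghost e))
  have h2 : FreeAlgebra.lift R (fGen G R) (FreeAlgebra.ι R (LGenR.ghost e)) = gGen G R e :=
    FreeAlgebra.lift_ι_apply _ _
  exact h1.trans h2

lemma phiHom_pGenR (A : {A : Set V // G.AccFam A}) :
    phiHom G R (pGenR G R A) = (phip G R A.1 A.2 : LeavittAlg G R) := by
  have h1 := RingQuot.liftAlgHom_mkAlgHom_apply (S := R)
    (FreeAlgebra.lift R (fGen G R)) (fGen_rel G R) (FreeAlgebra.ι R (LGenR.proj A))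
  have h2 : FreeAlgebra.lift R (fGen G R) (FreeAlgebra.ι R (LGenR.proj A)) =
      (phip G R A.1 A.2 : LeavittAlg G R) :=
    FreeAlgebra.lift_ι_apply _ _
  exact h1.trans h2

-- ### The algebra map `L_R(𝒢) → L_R(𝒢_r)`

def gGenFun : LGen G → LeavittAlgR G R
  | .edge e => eGenR G R e
  | .ghost e => gGenR G R e
  | .proj A => pGenR G R ⟨A.1, Ultragraph.AccFam.base A.2⟩

lemma gGenFun_rel : ∀ ⦃x y⦄, LRel G R x y →
    FreeAlgebra.lift R (gGenFun G R) x = FreeAlgebra.lift R (gGenFun G R) y := by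
  intro x y h
  induction h with
  | projEmpty =>
    simp only [FreeAlgebra.lift_ι_apply, map_zero, gGenFun]
    exact pGenR_empty G R
  | projInter A B =>
    simp only [map_mul, FreeAlgebra.lift_ι_apply, gGenFun]
    exact pGenR_mul G R ⟨A.1, .base A.2⟩ ⟨B.1, .base B.2⟩
  | projUnion A B =>
    simp only [map_mul, map_add, map_sub, FreeAlgebra.lift_ι_apply, gGenFun]
    exact pGenR_union G R ⟨A.1, .base A.2⟩ ⟨B.1, .base B.2⟩
  | srcEdge e =>
    simp only [map_mul, FreeAlgebra.lift_ι_apply, gGenFun]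
    have := RingQuot.mkAlgHom_rel R (LRelR.srcEdge (G := G) (R := R) e)
    simp only [map_mul, map_add, map_sub, map_zero, map_sum] at this
    exact this
  | edgeRng e =>
    simp only [map_mul, FreeAlgebra.lift_ι_apply, gGenFun]
    have := RingQuot.mkAlgHom_rel R (LRelR.edgeRng (G := G) (R := R) e)
    simp only [map_mul, map_add, map_sub, map_zero, map_sum] at this
    exact this
  | rngGhost e =>
    simp only [map_mul, FreeAlgebra.lift_ι_apply, gGenFun]
    have := RingQuot.mkAlgHom_rel R (LRelR.rngGhost (G := G) (R := R) e)
    simp only [map_mul, map_add, map_sub, map_zero, map_sum] at this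
    exact this
  | ghostSrc e =>
    simp only [map_mul, FreeAlgebra.lift_ι_apply, gGenFun]
    have := RingQuot.mkAlgHom_rel R (LRelR.ghostSrc (G := G) (R := R) e)
    simp only [map_mul, map_add, map_sub, map_zero, map_sum] at this
    exact this
  | ghostEdgeSame e =>
    simp only [map_mul, FreeAlgebra.lift_ι_apply, gGenFun]
    have := RingQuot.mkAlgHom_rel R (LRelR.ghostEdgeSame (G := G) (R := R) e)
    simp only [map_mul, map_add, map_sub, map_zero, map_sum] at this
    exact this
  | ghostEdgeDiff e f hef =>
    simp only [map_mul, map_zero, FreeAlgebra.lift_ι_apply, gGenFun]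
    have := RingQuot.mkAlgHom_rel R (LRelR.ghostEdgeDiff (G := G) (R := R) e f hef)
    simp only [map_mul, map_add, map_sub, map_zero, map_sum] at this
    exact this
  | ck v h1 h2 =>
    simp only [map_mul, map_sum, FreeAlgebra.lift_ι_apply, gGenFun]
    have := RingQuot.mkAlgHom_rel R (LRelR.ck (G := G) (R := R) v h1 h2)
    simp only [map_mul, map_add, map_sub, map_zero, map_sum] at this
    exact this

/-- The algebra map `L_R(𝒢) → L_R(𝒢_r)`. -/
def psiHom : LeavittAlg G R →ₐ[R] LeavittAlgR G R :=
  RingQuot.liftAlgHom R ⟨FreeAlgebra.lift R (gGenFun G R), gGenFun_rel G R⟩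

lemma psiHom_eGen (e : E) : psiHom G R (eGen G R e) = eGenR G R e := by
  have h1 := RingQuot.liftAlgHom_mkAlgHom_apply (S := R)
    (FreeAlgebra.lift R (gGenFun G R)) (gGenFun_rel G R) (FreeAlgebra.ι R (LGen.edge e))
  have h2 : FreeAlgebra.lift R (gGenFun G R) (FreeAlgebra.ι R (LGen.edge e)) = eGenR G R e :=
    FreeAlgebra.lift_ι_apply _ _
  exact h1.trans h2

lemma psiHom_gGen (e : E) : psiHom G R (gGen G R e) = gGenR G R e := by
  have h1 := RingQuot.liftAlgHom_mkAlgHom_apply (S := R)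
    (FreeAlgebra.lift R (gGenFun G R)) (gGenFun_rel G R) (FreeAlgebra.ι R (LGen.ghost e))
  have h2 : FreeAlgebra.lift R (gGenFun G R) (FreeAlgebra.ι R (LGen.ghost e)) = gGenR G R e :=
    FreeAlgebra.lift_ι_apply _ _
  exact h1.trans h2

lemma psiHom_pGen (A : {A : Set V // G.GZero A}) :
    psiHom G R (pGen G R A) = pGenR G R ⟨A.1, Ultragraph.AccFam.base A.2⟩ := by
  have h1 := RingQuot.liftAlgHom_mkAlgHom_apply (S := R)
    (FreeAlgebra.lift R (gGenFun G R)) (gGenFun_rel G R) (FreeAlgebra.ι R (LGen.proj A))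
  have h2 : FreeAlgebra.lift R (gGenFun G R) (FreeAlgebra.ι R (LGen.proj A)) =
      pGenR G R ⟨A.1, Ultragraph.AccFam.base A.2⟩ :=
    FreeAlgebra.lift_ι_apply _ _
  exact h1.trans h2

-- ### `psiHom` maps the commutative projection subring into the `𝒢_r` one

lemma psi_mem_TR (x : Algebra.adjoin ℤ (pFam G R)) :
    psiHom G R (x : LeavittAlg G R) ∈ Algebra.adjoin ℤ (pFamR G R) := by
  obtain ⟨x, hx⟩ := x
  induction hx using Algebra.adjoin_induction with
  | mem x hxg =>
    obtain ⟨A, rfl⟩ := hxg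
    rw [psiHom_pGen]
    exact Algebra.subset_adjoin ⟨⟨A.1, .base A.2⟩, rfl⟩
  | algebraMap r =>
    have : psiHom G R (algebraMap ℤ (LeavittAlg G R) r) = algebraMap ℤ (LeavittAlgR G R) r := by
      simp [algebraMap_int_eq, map_intCast]
    rw [this]
    exact Subalgebra.algebraMap_mem _ r
  | add x y hx hy ihx ihy =>
    rw [map_add]
    exact Subalgebra.add_mem _ ihx ihy
  | mul x y hx hy ihx ihy =>
    rw [map_mul]
    exact Subalgebra.mul_mem _ ihx ihy

/-- `psiHom` restricted to the projection subrings, as an additive map. -/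
def thetaAdd : Algebra.adjoin ℤ (pFam G R) →+ Algebra.adjoin ℤ (pFamR G R) where
  toFun x := ⟨psiHom G R (x : LeavittAlg G R), psi_mem_TR G R x⟩
  map_zero' := Subtype.ext (by simp)
  map_add' x y := Subtype.ext (by simp)

lemma theta_W (z : (V → ℤ) × Algebra.adjoin ℤ (pFam G R))
    (hz : z ∈ Wmod (DG G) (pT G R)) :
    (LinearMap.prodMap LinearMap.id (thetaAdd G R).toIntLinearMap) z ∈
      Wmod (DR G) (pTR G R) := by
  induction hz using Submodule.span_induction with
  | mem z hzg =>
    obtain ⟨i, rfl⟩ := hzg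
    have : (LinearMap.prodMap LinearMap.id (thetaAdd G R).toIntLinearMap)
        (genPair (DG G) (pT G R) i) = genPair (DR G) (pTR G R) ⟨(i : Set V), .base i.2⟩ := by
      simp only [genPair, LinearMap.prodMap_apply, LinearMap.id_apply,
        AddMonoidHom.coe_toIntLinearMap]
      refine Prod.ext rfl ?_
      rw [thetaAdd]
      simp only [AddMonoidHom.coe_mk, ZeroHom.coe_mk]
      apply Subtype.ext
      simp only [pT, pTR]
      rw [dif_pos (show G.GZero (i : Set V) from i.2),
        dif_pos (show G.AccFam (i : Set V) from Ultragraph.AccFam.base i.2)]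
      exact psiHom_pGen G R ⟨(i : Set V), i.2⟩
    rw [this]
    exact genPair_mem _ _ _
  | zero => rw [map_zero]; exact Submodule.zero_mem _
  | add x y hx hy ihx ihy => rw [map_add]; exact Submodule.add_mem _ ihx ihy
  | smul n x hx ihx => rw [map_smul]; exact Submodule.smul_mem _ _ ihx

lemma psi_phip (A : Set V) (hA : G.AccFam A) :
    psiHom G R ((phip G R A hA : LeavittAlg G R)) = pGenR G R ⟨A, hA⟩ := by
  have h1 := theta_W G R _ (phip_mem G R A hA)
  have h1' : (indZ A, (⟨psiHom G R ((phip G R A hA : LeavittAlg G R)),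
      psi_mem_TR G R _⟩ : Algebra.adjoin ℤ (pFamR G R))) ∈ Wmod (DR G) (pTR G R) := by
    simpa [thetaAdd] using h1
  have h2 : (indZ A, pTR G R A) ∈ Wmod (DR G) (pTR G R) := by
    have := genPair_mem (DR G) (pTR G R) ⟨A, mem_DR G hA⟩
    simpa [genPair] using this
  have := key_snd_eq (DR_empty G) (DR_inter G) (DR_union G) (pTR_empty G R) (pTR_mul G R)
    (pTR_union G R) h1' h2
  have hval := congrArg Subtype.val this
  simp only at hval
  rw [hval]
  simp only [pTR]
  rw [dif_pos hA]

-- ### The isomorphism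

lemma phi_psi : (phiHom G R).comp (psiHom G R) = AlgHom.id R (LeavittAlg G R) := by
  apply RingQuot.ringQuot_ext'
  apply FreeAlgebra.hom_ext
  funext x
  simp only [Function.comp_apply, AlgHom.coe_comp, AlgHom.coe_id, id_eq]
  cases x with
  | edge e =>
    show phiHom G R (psiHom G R (eGen G R e)) = eGen G R e
    rw [psiHom_eGen, phiHom_eGenR]
  | ghost e =>
    show phiHom G R (psiHom G R (gGen G R e)) = gGen G R e
    rw [psiHom_gGen, phiHom_gGenR]
  | proj A =>
    show phiHom G R (psiHom G R (pGen G R A)) = pGen G R A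
    rw [psiHom_pGen, phiHom_pGenR]
    exact phip_base G R A.1 A.2 _

lemma psi_phi : (psiHom G R).comp (phiHom G R) = AlgHom.id R (LeavittAlgR G R) := by
  apply RingQuot.ringQuot_ext'
  apply FreeAlgebra.hom_ext
  funext x
  simp only [Function.comp_apply, AlgHom.coe_comp, AlgHom.coe_id, id_eq]
  cases x with
  | edge e =>
    show psiHom G R (phiHom G R (eGenR G R e)) = eGenR G R e
    rw [phiHom_eGenR, psiHom_eGen]
  | ghost e =>
    show psiHom G R (phiHom G R (gGenR G R e)) = gGenR G R e
    rw [phiHom_gGenR, psiHom_gGen]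
  | proj A =>
    show psiHom G R (phiHom G R (pGenR G R A)) = pGenR G R A
    rw [phiHom_pGenR, psi_phip]

/-- The isomorphism `L_R(𝒢_r) ≃ L_R(𝒢)`. -/
def leavittEquiv : LeavittAlgR G R ≃ₐ[R] LeavittAlg G R :=
  AlgEquiv.ofAlgHom (phiHom G R) (psiHom G R) (phi_psi G R) (psi_phi G R)

end IsoConstruction

/-- `L_R(𝒢_r)` and `L_R(𝒢)` are isomorphic as `R`-algebras, via an
isomorphism mapping `s_e ↦ s_e`, `s_e* ↦ s_e*` and `p_A ↦ p_A` for all `A ∈ 𝒢⁰`. -/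
theorem leavittAlgR_iso_leavittAlg
    {V E : Type*} [Countable V] [Countable E] (G : Ultragraph V E)
    (R : Type*) [CommRing R] :
    ∃ φ : LeavittAlgR G R ≃ₐ[R] LeavittAlg G R,
      (∀ e : E, φ (eGenR G R e) = eGen G R e) ∧
      (∀ e : E, φ (gGenR G R e) = gGen G R e) ∧
      ∀ (A : Set V) (hA : G.GZero A),
        φ (pGenR G R ⟨A, Ultragraph.AccFam.base hA⟩) = pGen G R ⟨A, hA⟩ := by
  refine ⟨leavittEquiv G R, fun e => phiHom_eGenR G R e, fun e => phiHom_gGenR G R e, ?_⟩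
  intro A hA
  show phiHom G R (pGenR G R ⟨A, Ultragraph.AccFam.base hA⟩) = pGen G R ⟨A, hA⟩
  rw [phiHom_pGenR]
  exact phip_base G R A hA _
end

section
/- Let 𝒢 be a connected ultragraph and R a commutative unital ring. If the center Z(L_R(𝒢)) equals the abelian core M(L_R(𝒢)), then G⁰ consists of a single vertex and 𝒢¹ contains at most one edge; consequently L_R(𝒢) is isomorphic either to R or to the Laurent polynomial ring R[x, x⁻¹]. -/
variable {V : Type*} {E : Type*}

variable (G : Ultragraph V E) (R : Type*) [CommRing R]

/-- An ultragraph is connected if for all vertices `v, w` there is a finite path from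
`v` whose range contains `w` (a length-zero path connecting `v` to itself is allowed). -/
def Ultragraph.Connected (G : Ultragraph V E) : Prop :=
  ∀ v w : V, v = w ∨ ∃ (α : List E) (e : E),
    G.IsPath α ∧ α.head? = some e ∧ G.src e = v ∧ w ∈ G.pathRange α

namespace LPA
open Ultragraph

variable {V : Type*} {E : Type*} (G : Ultragraph V E)

/-- A "good" tag: a sink or an infinite emitter. -/
def IsTag (v : V) : Prop := (∀ e, G.src e ≠ v) ∨ {f | G.src f = v}.Infinite

@[ext] structure FinB where
  path : List E
  tag : V
  isPath : G.IsPath path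
  mem : tag ∈ G.pathRange path
  good : IsTag G tag

@[ext] structure InfB where
  seq : ℕ → E
  chain : ∀ n, G.src (seq (n+1)) ∈ G.rng (seq n)

/-- Boundary paths. -/
abbrev BP := FinB G ⊕ InfB G

def startBP : BP G → V
  | .inl b => b.path.head?.elim b.tag G.src
  | .inr x => G.src (x.seq 0)

lemma tail_mem {f : E} {l : List E} {t : V} (h : t ∈ G.pathRange (f :: l)) :
    t ∈ G.pathRange l := by
  cases l with
  | nil => simp [Ultragraph.pathRange]
  | cons g l' => simpa [Ultragraph.pathRange, List.getLast?_cons_cons] using h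

def consBP (e : E) (b : BP G) (h : startBP G b ∈ G.rng e) : BP G :=
  match b, h with
  | .inl b, h => .inl
      { path := e :: b.path
        tag := b.tag
        isPath := List.isChain_cons.mpr
          ⟨by
            intro f hf
            have : b.path.head?.elim b.tag G.src = G.src f := by
              cases hp : b.path with
              | nil => simp [hp] at hf
              | cons g l => rw [hp] at hf; simp at hf; subst hf; simp [hp]
            rw [startBP] at h
            rwa [this] at h, b.isPath⟩
        mem := by
          cases hp : b.path with
          | nil =>
            have : startBP G (.inl b) = b.tag := by simp [startBP, hp]
            rw [this] at h
            simpa [Ultragraph.pathRange, hp] using h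
          | cons g l =>
            have hm := b.mem
            rw [hp] at hm
            simpa [Ultragraph.pathRange, List.getLast?_cons_cons] using hm
        good := b.good }
  | .inr x, h => .inr
      { seq := fun n => match n with | 0 => e | k+1 => x.seq k
        chain := by
          intro n
          cases n with
          | zero => exact h
          | succ k => exact x.chain k }

@[simp] lemma startBP_consBP (e : E) (b : BP G) (h : startBP G b ∈ G.rng e) :
    startBP G (consBP G e b h) = G.src e := by
  rcases b with b | x <;> simp [consBP, startBP]

end LPA
namespace LPA
open scoped Classical
variable {V : Type*} {E : Type*} (G : Ultragraph V E) (R : Type*) [CommRing R]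

noncomputable def opOf (g : BP G → (BP G →₀ R)) : (BP G →₀ R) →ₗ[R] (BP G →₀ R) :=
  Finsupp.lsum R fun b => LinearMap.toSpanSingleton R _ (g b)

@[simp] lemma opOf_single (g : BP G → (BP G →₀ R)) (b : BP G) (r : R) :
    opOf G R g (Finsupp.single b r) = r • g b := by
  simp [opOf, LinearMap.toSpanSingleton_apply]

noncomputable def pAct (A : Set V) (b : BP G) : BP G →₀ R :=
  if startBP G b ∈ A then Finsupp.single b 1 else 0

noncomputable def eAct (e : E) (b : BP G) : BP G →₀ R :=
  if h : startBP G b ∈ G.rng e then Finsupp.single (consBP G e b h) 1 else 0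

noncomputable def gAct (e : E) : BP G → (BP G →₀ R)
  | .inl ⟨[], _, _, _, _⟩ => 0
  | .inl ⟨f :: l, t, h1, h2, h3⟩ =>
      if f = e then Finsupp.single (.inl ⟨l, t, h1.tail, tail_mem G h2, h3⟩) 1 else 0
  | .inr x =>
      if x.seq 0 = e then
        Finsupp.single (.inr ⟨fun n => x.seq (n+1), fun n => x.chain (n+1)⟩) 1
      else 0

noncomputable def genOp : LGen G → Module.End R (BP G →₀ R)
  | .edge e => opOf G R (eAct G R e)
  | .ghost e => opOf G R (gAct G R e)
  | .proj A => opOf G R (pAct G R A.1)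

noncomputable def Phi : FreeAlgebra R (LGen G) →ₐ[R] Module.End R (BP G →₀ R) :=
  FreeAlgebra.lift R (genOp G R)

end LPA
namespace LPA
open scoped Classical
variable {V : Type*} {E : Type*} (G : Ultragraph V E) (R : Type*) [CommRing R]

lemma start_tail {f : E} {l : List E} {t : V} (h1 : G.IsPath (f :: l))
    (h2 : t ∈ G.pathRange (f :: l)) : l.head?.elim t G.src ∈ G.rng f := by
  cases l with
  | nil => simpa [Ultragraph.pathRange] using h2
  | cons g l' =>
    have := (List.isChain_cons_cons.mp h1).1
    simpa using this

lemma gAct_consBP (e f : E) (b : BP G) (h : startBP G b ∈ G.rng f) :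
    gAct G R e (consBP G f b h) = if f = e then Finsupp.single b 1 else 0 := by
  rcases b with ⟨p, t, hp1, hp2, hp3⟩ | x
  · rfl
  · simp only [consBP, gAct]

theorem rel_holds ⦃x y : FreeAlgebra R (LGen G)⦄ (h : LRel G R x y) :
    Phi G R x = Phi G R y := by
  induction h with
  | projEmpty =>
    apply Finsupp.lhom_ext
    intro b r
    simp [Phi, FreeAlgebra.lift_ι_apply, genOp, pAct]
  | projInter A B =>
    apply Finsupp.lhom_ext
    intro b r
    simp only [Phi, map_mul, FreeAlgebra.lift_ι_apply, genOp, Module.End.mul_apply, opOf_single,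
      map_smul, pAct]
    by_cases hA : startBP G b ∈ A.1 <;> by_cases hB : startBP G b ∈ B.1 <;>
      simp [pAct, hA, hB, Set.mem_inter_iff]
  | projUnion A B =>
    apply Finsupp.lhom_ext
    intro b r
    simp only [Phi, map_mul, map_add, map_sub, FreeAlgebra.lift_ι_apply, genOp,
      LinearMap.add_apply, LinearMap.sub_apply, Module.End.mul_apply, opOf_single, map_smul, pAct]
    by_cases hA : startBP G b ∈ A.1 <;> by_cases hB : startBP G b ∈ B.1 <;>
      simp [pAct, hA, hB, Set.mem_inter_iff, Set.mem_union]
  | srcEdge e =>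
    apply Finsupp.lhom_ext
    intro b r
    simp only [Phi, map_mul, FreeAlgebra.lift_ι_apply, genOp, Module.End.mul_apply, opOf_single,
      map_smul, eAct]
    by_cases h : startBP G b ∈ G.rng e
    · simp [h, pAct]
    · simp [h]
  | edgeRng e =>
    apply Finsupp.lhom_ext
    intro b r
    simp only [Phi, map_mul, FreeAlgebra.lift_ι_apply, genOp, Module.End.mul_apply, opOf_single,
      map_smul, pAct]
    by_cases h : startBP G b ∈ G.rng e
    · simp [h, eAct]
    · simp [h, eAct]
  | rngGhost e =>
    apply Finsupp.lhom_ext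
    intro b r
    simp only [Phi, map_mul, FreeAlgebra.lift_ι_apply, genOp, Module.End.mul_apply, opOf_single,
      map_smul]
    rcases b with ⟨_ | ⟨f, l⟩, t, hp1, hp2, hp3⟩ | x
    · simp [gAct]
    · by_cases hfe : f = e
      · subst hfe
        have hst : startBP G (Sum.inl ⟨l, t, hp1.tail, tail_mem G hp2, hp3⟩) ∈ G.rng f :=
          start_tail G hp1 hp2
        simp [gAct, pAct, hst]
        try (intro hc; exact absurd (by simpa [startBP] using hst) hc)
      · simp [gAct, hfe]
    · by_cases hfe : x.seq 0 = e
      · have hst : startBP G (Sum.inr ⟨fun n => x.seq (n+1), fun n => x.chain (n+1)⟩)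
            ∈ G.rng e := by
          have := x.chain 0
          rw [hfe] at this
          exact this
        simp [gAct, pAct, hfe, hst, startBP]
        try (intro hc; exact absurd (by simpa [startBP] using hst) hc)
      · simp [gAct, hfe]
  | ghostSrc e =>
    apply Finsupp.lhom_ext
    intro b r
    simp only [Phi, map_mul, FreeAlgebra.lift_ι_apply, genOp, Module.End.mul_apply, opOf_single,
      map_smul, pAct]
    rcases b with ⟨_ | ⟨f, l⟩, t, hp1, hp2, hp3⟩ | x
    · split_ifs <;> simp [gAct]
    · by_cases hc : startBP G (Sum.inl (⟨f :: l, t, hp1, hp2, hp3⟩ : FinB G)) ∈ ({G.src e} : Set V)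
      · simp [hc]
      · have hfe : f ≠ e := by
          intro hfe
          subst hfe
          exact hc (by simp [startBP])
        simp [hc, gAct, hfe]
    · by_cases hc : startBP G (Sum.inr x) ∈ ({G.src e} : Set V)
      · simp [hc]
      · have hfe : x.seq 0 ≠ e := by
          intro hfe
          exact hc (by simp [startBP, hfe])
        simp [hc, gAct, hfe]
  | ghostEdgeSame e =>
    apply Finsupp.lhom_ext
    intro b r
    simp only [Phi, map_mul, FreeAlgebra.lift_ι_apply, genOp, Module.End.mul_apply, opOf_single,
      map_smul, eAct, pAct]
    by_cases h : startBP G b ∈ G.rng e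
    · rw [dif_pos h, if_pos h]
      rw [opOf_single, one_smul]
      congr 1
      rw [gAct_consBP, if_pos rfl]
    · simp [h]
  | ghostEdgeDiff e f hef =>
    apply Finsupp.lhom_ext
    intro b r
    simp only [Phi, map_mul, FreeAlgebra.lift_ι_apply, genOp, Module.End.mul_apply, opOf_single,
      map_smul, eAct]
    by_cases h : startBP G b ∈ G.rng f
    · rw [dif_pos h, opOf_single, one_smul, gAct_consBP, if_neg (Ne.symm hef)]
      simp [Phi]
    · simp [h, Phi]
  | ck v h1 h2 =>
    apply Finsupp.lhom_ext
    intro b r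
    simp only [Phi, map_sum, map_mul, FreeAlgebra.lift_ι_apply, genOp, LinearMap.sum_apply,
      Module.End.mul_apply, opOf_single, map_smul]
    rcases b with ⟨_ | ⟨f, l⟩, t, hp1, hp2, hp3⟩ | x
    · have ht : t ≠ v := by
        rintro rfl
        rcases hp3 with hs | hinf
        · obtain ⟨e0, he0⟩ := h2
          exact hs e0 he0
        · exact hinf h1
      simp [gAct, pAct, startBP, ht]
    · have hst : startBP G (Sum.inl (⟨l, t, hp1.tail, tail_mem G hp2, hp3⟩ : FinB G)) ∈ G.rng f :=
        start_tail G hp1 hp2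
      have hterm : ∀ e ∈ h1.toFinset,
          r • (opOf G R (eAct G R e)) (gAct G R e (Sum.inl (⟨f :: l, t, hp1, hp2, hp3⟩ : FinB G)))
            = if f = e then r • Finsupp.single (Sum.inl (⟨f :: l, t, hp1, hp2, hp3⟩ : FinB G)) 1
              else 0 := by
        intro e _
        by_cases hfe : f = e
        · subst hfe
          have hg : gAct G R f (Sum.inl (⟨f :: l, t, hp1, hp2, hp3⟩ : FinB G))
              = Finsupp.single (Sum.inl (⟨l, t, hp1.tail, tail_mem G hp2, hp3⟩ : FinB G) : BP G)
                  1 := by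
            simp [gAct]
          have he' : eAct G R f (Sum.inl (⟨l, t, hp1.tail, tail_mem G hp2, hp3⟩ : FinB G) : BP G)
              = Finsupp.single (Sum.inl (⟨f :: l, t, hp1, hp2, hp3⟩ : FinB G) : BP G) 1 := by
            simp only [eAct]
            rw [dif_pos hst]
            rfl
          rw [hg, opOf_single, one_smul, he']
          simp
        · simp [gAct, hfe]
      rw [Finset.sum_congr rfl hterm, Finset.sum_ite_eq]
      by_cases hfv : G.src f = v <;>
        simp [pAct, startBP, hfv, Set.Finite.mem_toFinset]
    · have hst : startBP G (Sum.inr (⟨fun n => x.seq (n+1), fun n => x.chain (n+1)⟩ : InfB G))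
          ∈ G.rng (x.seq 0) := x.chain 0
      have hterm : ∀ e ∈ h1.toFinset,
          r • (opOf G R (eAct G R e)) (gAct G R e (Sum.inr x))
            = if x.seq 0 = e then r • Finsupp.single (Sum.inr x : BP G) 1 else 0 := by
        intro e _
        by_cases hfe : x.seq 0 = e
        · have hst' : startBP G
              (Sum.inr (⟨fun n => x.seq (n+1), fun n => x.chain (n+1)⟩ : InfB G) : BP G)
                ∈ G.rng e := by simpa [startBP, ← hfe] using x.chain 0
          have hcons : consBP G e
              (Sum.inr (⟨fun n => x.seq (n+1), fun n => x.chain (n+1)⟩ : InfB G) : BP G) hst'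
                = Sum.inr x := by
            simp only [consBP]
            congr 1
            ext n
            cases n with
            | zero => exact hfe.symm
            | succ k => rfl
          have hg : gAct G R e (Sum.inr x)
              = Finsupp.single
                  (Sum.inr (⟨fun n => x.seq (n+1), fun n => x.chain (n+1)⟩ : InfB G) : BP G) 1 := by
            simp [gAct, hfe]
          have he' : eAct G R e
              (Sum.inr (⟨fun n => x.seq (n+1), fun n => x.chain (n+1)⟩ : InfB G) : BP G)
                = Finsupp.single (Sum.inr x : BP G) 1 := by
            simp only [eAct]
            rw [dif_pos hst', hcons]
          rw [hg, opOf_single, one_smul, he']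
          simp [hfe]
        · simp [gAct, hfe]
      rw [Finset.sum_congr rfl hterm, Finset.sum_ite_eq]
      by_cases hfv : G.src (x.seq 0) = v <;>
        simp [pAct, startBP, hfv, Set.Finite.mem_toFinset]

end LPA
namespace LPA
open scoped Classical
variable {V : Type*} {E : Type*} (G : Ultragraph V E) (R : Type*) [CommRing R]

noncomputable def pi : LeavittAlg G R →ₐ[R] Module.End R (BP G →₀ R) :=
  RingQuot.liftAlgHom R ⟨Phi G R, rel_holds G R⟩

lemma pi_pGen (A : {A : Set V // G.GZero A}) :
    pi G R (pGen G R A) = opOf G R (pAct G R A.1) := by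
  rw [pGen, pi]
  exact (RingQuot.liftAlgHom_mkAlgHom_apply R (Phi G R) (rel_holds G R) _).trans
    (by simp [Phi, genOp])

inductive Leads : V → Prop
  | good (v : V) : IsTag G v → Leads v
  | step (v : V) (e : E) (u : V) : G.src e = v → u ∈ G.rng e → Leads u → Leads v

lemma leads_bp {w : V} (h : Leads G w) : ∃ b : BP G, startBP G b = w := by
  induction h with
  | good v hv =>
    exact ⟨Sum.inl ⟨[], v, List.isChain_nil, by simp [Ultragraph.pathRange], hv⟩, rfl⟩
  | step v e u he hu _ ih =>
    obtain ⟨b, hb⟩ := ih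
    exact ⟨consBP G e b (by rw [hb]; exact hu), by simp [he]⟩

lemma not_leads_bp {w : V} (h : ¬ Leads G w) : ∃ b : BP G, startBP G b = w := by
  have key : ∀ u : {u : V // ¬ Leads G u}, ∃ (e : E) (u' : V),
      ¬ Leads G u' ∧ G.src e = u.1 ∧ u' ∈ G.rng e := by
    rintro ⟨u, hu⟩
    have hgood : ¬ IsTag G u := fun ht => hu (Leads.good u ht)
    have hex : ∃ e, G.src e = u := by
      by_contra hne
      push_neg at hne
      exact hgood (Or.inl hne)
    obtain ⟨e, he⟩ := hex
    obtain ⟨u', hu'⟩ := G.rng_nonempty e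
    refine ⟨e, u', fun hl => hu (Leads.step u e u' he hu' hl), he, hu'⟩
  choose ed nx hnl hsrc hrng using key
  let F : {u : V // ¬ Leads G u} → {u : V // ¬ Leads G u} := fun u => ⟨nx u, hnl u⟩
  let g : ℕ → {u : V // ¬ Leads G u} := fun n => F^[n] ⟨w, h⟩
  refine ⟨Sum.inr ⟨fun n => ed (g n), ?_⟩, ?_⟩
  · intro n
    have hg : g (n+1) = F (g n) := Function.iterate_succ_apply' F n _
    rw [hsrc (g (n+1)), hg]
    exact hrng (g n)
  · show G.src (ed (g 0)) = w
    rw [hsrc (g 0)]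
    rfl

lemma exists_start (w : V) : ∃ b : BP G, startBP G b = w := by
  by_cases h : Leads G w
  · exact leads_bp G h
  · exact not_leads_bp G h

lemma pGen_ne_zero [Nontrivial R] {A : Set V} (hA : G.GZero A) {w : V} (hw : w ∈ A) :
    pGen G R ⟨A, hA⟩ ≠ 0 := by
  intro h0
  obtain ⟨b, hb⟩ := exists_start G w
  have := congrArg (pi G R) h0
  rw [pi_pGen, map_zero] at this
  have h2 := congrArg (fun T : Module.End R (BP G →₀ R) => T (Finsupp.single b 1)) this
  simp only [LinearMap.zero_apply] at h2
  rw [opOf_single, one_smul, pAct, if_pos (hb ▸ hw)] at h2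
  exact one_ne_zero (Finsupp.single_eq_zero.mp h2)

/-! ### Relation lemmas in `LeavittAlg` -/

lemma pGen_congr {A B : Set V} (hA : G.GZero A) (hB : G.GZero B) (h : A = B) :
    pGen G R ⟨A, hA⟩ = pGen G R ⟨B, hB⟩ := by subst h; rfl

lemma pGen_mul (A B : {A : Set V // G.GZero A}) :
    pGen G R A * pGen G R B = pGen G R ⟨A.1 ∩ B.1, A.2.inter B.2⟩ := by
  have h := RingQuot.mkAlgHom_rel R ((LRel.projInter A B : LRel G R _ _))
  rw [map_mul] at h
  rw [pGen, pGen, pGen]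
  exact h

lemma pGen_empty : pGen G R ⟨∅, Ultragraph.GZero.empty⟩ = 0 := by
  rw [pGen]
  rw [RingQuot.mkAlgHom_rel R ((LRel.projEmpty : LRel G R _ _)), map_zero]
  rfl

lemma psrc_mul_e (e : E) :
    pGen G R ⟨{G.src e}, Ultragraph.GZero.singleton _⟩ * eGen G R e = eGen G R e := by
  have h := RingQuot.mkAlgHom_rel R ((LRel.srcEdge e : LRel G R _ _))
  rw [map_mul] at h
  rw [pGen, eGen]
  exact h

lemma e_mul_prng (e : E) :
    eGen G R e * pGen G R ⟨G.rng e, Ultragraph.GZero.range e⟩ = eGen G R e := by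
  have h := RingQuot.mkAlgHom_rel R ((LRel.edgeRng e : LRel G R _ _))
  rw [map_mul] at h
  rw [pGen, eGen]
  exact h

lemma prng_mul_g (e : E) :
    pGen G R ⟨G.rng e, Ultragraph.GZero.range e⟩ * gGen G R e = gGen G R e := by
  have h := RingQuot.mkAlgHom_rel R ((LRel.rngGhost e : LRel G R _ _))
  rw [map_mul] at h
  rw [pGen, gGen]
  exact h

lemma g_mul_psrc (e : E) :
    gGen G R e * pGen G R ⟨{G.src e}, Ultragraph.GZero.singleton _⟩ = gGen G R e := by
  have h := RingQuot.mkAlgHom_rel R ((LRel.ghostSrc e : LRel G R _ _))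
  rw [map_mul] at h
  rw [pGen, gGen]
  exact h

lemma g_mul_e_same (e : E) :
    gGen G R e * eGen G R e = pGen G R ⟨G.rng e, Ultragraph.GZero.range e⟩ := by
  have h := RingQuot.mkAlgHom_rel R ((LRel.ghostEdgeSame e : LRel G R _ _))
  rw [map_mul] at h
  rw [pGen, gGen, eGen]
  exact h

lemma g_mul_e_diff (e f : E) (h : e ≠ f) : gGen G R e * eGen G R f = 0 := by
  have h2 := RingQuot.mkAlgHom_rel R ((LRel.ghostEdgeDiff e f h : LRel G R _ _))
  rw [map_mul, map_zero] at h2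
  rw [gGen, eGen]
  exact h2

lemma ck_eq (v : V) (h1 : {e | G.src e = v}.Finite) (h2 : {e | G.src e = v}.Nonempty) :
    pGen G R ⟨{v}, Ultragraph.GZero.singleton v⟩
      = ∑ e ∈ h1.toFinset, eGen G R e * gGen G R e := by
  rw [pGen, RingQuot.mkAlgHom_rel R ((LRel.ck v h1 h2 : LRel G R _ _)), map_sum]
  refine Finset.sum_congr rfl fun e _ => ?_
  rw [map_mul, eGen, gGen]
  rfl

/-! ### Membership lemmas -/

lemma eGen_mem (e : E) : eGen G R e ∈ leavittSubalg G R :=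
  NonUnitalAlgebra.subset_adjoin R (Or.inl ⟨e, rfl⟩)

lemma gGen_mem (e : E) : gGen G R e ∈ leavittSubalg G R :=
  NonUnitalAlgebra.subset_adjoin R (Or.inr (Or.inl ⟨e, rfl⟩))

lemma pGen_mem (A : {A : Set V // G.GZero A}) : pGen G R A ∈ leavittSubalg G R :=
  NonUnitalAlgebra.subset_adjoin R (Or.inr (Or.inr ⟨A, rfl⟩))

lemma pGen_mem_core {A : Set V} (hA : G.GZero A) (hne : A.Nonempty) :
    pGen G R ⟨A, hA⟩ ∈ coreSubalg G R := by
  apply NonUnitalAlgebra.subset_adjoin R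
  refine ⟨[], [], A, hA, List.isChain_nil, List.isChain_nil, ?_, Or.inl rfl, ?_⟩
  · simpa [Ultragraph.pathRange] using hne
  · simp [sPath, gPath]

lemma q_mem_core (e : E) : eGen G R e * gGen G R e ∈ coreSubalg G R := by
  apply NonUnitalAlgebra.subset_adjoin R
  refine ⟨[e], [e], G.rng e, Ultragraph.GZero.range e, List.isChain_singleton e,
    List.isChain_singleton e, ?_, Or.inl rfl, ?_⟩
  · simpa [Ultragraph.pathRange] using G.rng_nonempty e
  · simp only [sPath, gPath, List.map_cons, List.map_nil, List.prod_cons, List.prod_nil,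
      List.reverse_cons, List.reverse_nil, List.nil_append, mul_one]
    rw [e_mul_prng]

end LPA
namespace LPA
variable {V : Type*} {E : Type*} (G : Ultragraph V E)

lemma pathRange_subset (hrng : ∀ (e : E) (w : V), w ∈ G.rng e → w = G.src e) :
    ∀ (α : List E) (e : E), G.IsPath α → α.head? = some e → G.pathRange α ⊆ {G.src e} := by
  intro α
  induction α with
  | nil => intro e _ h; simp at h
  | cons f l ih =>
    intro e hp hh
    simp only [List.head?_cons, Option.some.injEq] at hh
    subst hh
    cases l with
    | nil =>
      intro w hw
      have hw' : w ∈ G.rng f := by simpa [Ultragraph.pathRange] using hw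
      exact hrng f w hw'
    | cons g l' =>
      intro w hw
      have hw' : w ∈ G.pathRange (g :: l') := by
        simpa [Ultragraph.pathRange, List.getLast?_cons_cons] using hw
      have h2 := ih g hp.tail rfl hw'
      have h3 : G.src g = G.src f := hrng f _ (List.isChain_cons_cons.mp hp).1
      simp only [Set.mem_singleton_iff] at h2 ⊢
      rw [h2, h3]

end LPA
namespace LPA
open scoped Classical
variable {V : Type*} {E : Type*} (G : Ultragraph V E) (R : Type*) [CommRing R]

noncomputable def genR (v : V) : LGen G → R
  | .edge _ => 0
  | .ghost _ => 0
  | .proj A => if v ∈ A.1 then 1 else 0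

lemma rel_holds_R [IsEmpty E] (v : V) ⦃x y : FreeAlgebra R (LGen G)⦄ (h : LRel G R x y) :
    FreeAlgebra.lift R (genR G R v) x = FreeAlgebra.lift R (genR G R v) y := by
  induction h with
  | projEmpty => simp [FreeAlgebra.lift_ι_apply, genR]
  | projInter A B =>
    simp only [map_mul, FreeAlgebra.lift_ι_apply, genR]
    by_cases hA : v ∈ A.1 <;> by_cases hB : v ∈ B.1 <;> simp [hA, hB, Set.mem_inter_iff]
  | projUnion A B =>
    simp only [map_mul, map_add, map_sub, FreeAlgebra.lift_ι_apply, genR]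
    by_cases hA : v ∈ A.1 <;> by_cases hB : v ∈ B.1 <;>
      simp [hA, hB, Set.mem_inter_iff, Set.mem_union]
  | srcEdge e => exact isEmptyElim e
  | edgeRng e => exact isEmptyElim e
  | rngGhost e => exact isEmptyElim e
  | ghostSrc e => exact isEmptyElim e
  | ghostEdgeSame e => exact isEmptyElim e
  | ghostEdgeDiff e f h => exact isEmptyElim e
  | ck u h1 h2 => exact isEmptyElim h2.choose

noncomputable def phiR [IsEmpty E] (v : V) : LeavittAlg G R →ₐ[R] R :=
  RingQuot.liftAlgHom R ⟨FreeAlgebra.lift R (genR G R v), rel_holds_R G R v⟩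

lemma phiR_pGen [IsEmpty E] (v : V) (A : {A : Set V // G.GZero A}) :
    phiR G R v (pGen G R A) = if v ∈ A.1 then 1 else 0 := by
  rw [pGen, phiR]
  exact (RingQuot.liftAlgHom_mkAlgHom_apply R _ (rel_holds_R G R v) _).trans
    (by simp [FreeAlgebra.lift_ι_apply, genR])

lemma case_empty [IsEmpty E] [Nontrivial R] (v : V) (hv : ∀ w : V, w = v) :
    ∃ f : leavittSubalg G R →ₙₐ[R] R, Function.Bijective f := by
  classical
  set p : LeavittAlg G R := pGen G R ⟨{v}, Ultragraph.GZero.singleton v⟩ with hp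
  have hsingle : ∀ (A : Set V), A.Nonempty → A = {v} := by
    intro A hA
    ext x
    simp only [Set.mem_singleton_iff]
    exact ⟨fun _ => hv x, fun hx => by obtain ⟨y, hy⟩ := hA; rwa [hx, ← hv y]⟩
  have hpp : p * p = p := by
    rw [hp, pGen_mul]
    exact pGen_congr G R _ _ (by simp)
  have hphip : phiR G R v p = 1 := by rw [hp, phiR_pGen]; simp
  have hid : ∀ x ∈ leavittSubalg G R, (phiR G R v x) • p = x := by
    intro x hx
    induction hx using NonUnitalAlgebra.adjoin_induction with
    | mem x hx =>
      rcases hx with ⟨e, _⟩ | ⟨e, _⟩ | ⟨A, hA⟩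
      · exact isEmptyElim e
      · exact isEmptyElim e
      · subst hA
        by_cases hne : A.1.Nonempty
        · have hAv : A.1 = {v} := hsingle A.1 hne
          have hpA : pGen G R A = p := by
            rw [hp]
            exact pGen_congr G R A.2 _ hAv
          rw [hpA, hphip, one_smul]
        · have hAe : A.1 = ∅ := Set.not_nonempty_iff_eq_empty.mp hne
          have hpA : pGen G R A = 0 := by
            rw [show A = ⟨∅, Ultragraph.GZero.empty⟩ from Subtype.ext hAe]
            exact pGen_empty G R
          rw [hpA, map_zero, zero_smul]
    | add x y hx hy ihx ihy => rw [map_add, add_smul, ihx, ihy]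
    | zero => rw [map_zero, zero_smul]
    | mul x y hx hy ihx ihy =>
      rw [map_mul]
      calc (phiR G R v x * phiR G R v y) • p
          = (phiR G R v x • p) * (phiR G R v y • p) := by rw [smul_mul_smul_comm, hpp]
        _ = x * y := by rw [ihx, ihy]
    | smul r x hx ihx => rw [map_smul, smul_assoc, ihx]
  refine ⟨((phiR G R v).toNonUnitalAlgHom.comp
    (NonUnitalSubalgebraClass.subtype (leavittSubalg G R))), ?_, ?_⟩
  · intro x y hxy
    apply Subtype.ext
    have hx := hid x.1 x.2
    have hy := hid y.1 y.2
    have hpq : phiR G R v x.1 = phiR G R v y.1 := hxy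
    rw [← hx, ← hy, hpq]
  · intro r
    have hmem : r • p ∈ leavittSubalg G R :=
      SMulMemClass.smul_mem r (pGen_mem G R ⟨{v}, Ultragraph.GZero.singleton v⟩)
    refine ⟨⟨r • p, hmem⟩, ?_⟩
    show phiR G R v (r • p) = r
    rw [map_smul, hphip, smul_eq_mul, mul_one]

end LPA
set_option linter.unusedSectionVars false
namespace LPA
open scoped Classical

section UZ
variable {A : Type*} [Ring A] (p s t : A)

noncomputable def uZ (n : ℤ) : A :=
  if n = 0 then p else if 0 < n then s ^ n.toNat else t ^ (-n).toNat

variable (hps : p * s = s) (hsp : s * p = s) (hpt : p * t = t) (htp : t * p = t)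
  (hts : t * s = p) (hst : s * t = p) (hpp : p * p = p)

lemma uZ_zero : uZ p s t 0 = p := if_pos rfl

lemma uZ_of_pos {n : ℤ} (h : 0 < n) : uZ p s t n = s ^ n.toNat := by
  rw [uZ, if_neg (by omega), if_pos h]

lemma uZ_of_neg {n : ℤ} (h : n < 0) : uZ p s t n = t ^ (-n).toNat := by
  rw [uZ, if_neg (by omega), if_neg (by omega)]

include hps hsp hpt htp hts hst hpp

lemma p_mul_uZ (n : ℤ) : p * uZ p s t n = uZ p s t n := by
  rcases lt_trichotomy n 0 with h | rfl | h
  · obtain ⟨m, hm⟩ : ∃ m, (-n).toNat = m + 1 := ⟨(-n).toNat - 1, by omega⟩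
    rw [uZ_of_neg p s t h, hm, pow_succ', ← mul_assoc, hpt]
  · rw [uZ_zero, hpp]
  · obtain ⟨m, hm⟩ : ∃ m, n.toNat = m + 1 := ⟨n.toNat - 1, by omega⟩
    rw [uZ_of_pos p s t h, hm, pow_succ', ← mul_assoc, hps]

lemma s_mul_uZ (n : ℤ) : s * uZ p s t n = uZ p s t (n+1) := by
  rcases lt_trichotomy n 0 with h | rfl | h
  · rcases eq_or_lt_of_le (by omega : n ≤ -1) with h1 | h2
    · subst h1
      rw [show (-1 : ℤ) + 1 = 0 from by norm_num, uZ_zero,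
        uZ_of_neg p s t (by omega : (-1:ℤ) < 0), show ((-(-1:ℤ)).toNat) = 1 from rfl,
        pow_one, hst]
    · obtain ⟨m, hm⟩ : ∃ m, (-n).toNat = m + 2 := ⟨(-n).toNat - 2, by omega⟩
      rw [uZ_of_neg p s t h, hm, pow_succ', ← mul_assoc, hst, uZ_of_neg p s t (by omega),
        show (-(n+1)).toNat = m + 1 from by omega, pow_succ', ← mul_assoc, hpt]
  · rw [uZ_zero, hsp, uZ_of_pos p s t (by omega), show ((0:ℤ)+1).toNat = 1 from rfl, pow_one]
  · rw [uZ_of_pos p s t h, uZ_of_pos p s t (by omega),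
      show (n+1).toNat = n.toNat + 1 from by omega, pow_succ']

lemma t_mul_uZ (n : ℤ) : t * uZ p s t n = uZ p s t (n-1) := by
  rcases lt_trichotomy n 0 with h | rfl | h
  · rw [uZ_of_neg p s t h, uZ_of_neg p s t (by omega),
      show (-(n-1)).toNat = (-n).toNat + 1 from by omega, pow_succ']
  · rw [uZ_zero, htp, uZ_of_neg p s t (by omega), show ((-((0:ℤ)-1)).toNat) = 1 from rfl,
      pow_one]
  · rcases eq_or_lt_of_le (by omega : 1 ≤ n) with h1 | h2
    · subst h1
      rw [show (1 : ℤ) - 1 = 0 from by norm_num, uZ_zero,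
        uZ_of_pos p s t (by omega : (0:ℤ) < 1), show ((1:ℤ)).toNat = 1 from rfl, pow_one, hts]
    · obtain ⟨m, hm⟩ : ∃ m, n.toNat = m + 2 := ⟨n.toNat - 2, by omega⟩
      rw [uZ_of_pos p s t h, hm, pow_succ', ← mul_assoc, hts, uZ_of_pos p s t (by omega),
        show (n-1).toNat = m + 1 from by omega, pow_succ', ← mul_assoc, hps]

lemma spow_mul_uZ (k : ℕ) (n : ℤ) : s ^ k * uZ p s t n = uZ p s t (n + k) := by
  induction k with
  | zero => rw [pow_zero, one_mul]; norm_num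
  | succ m ih =>
    rw [pow_succ', mul_assoc, ih, s_mul_uZ p s t hps hsp hpt htp hts hst hpp (n + m)]
    congr 1
    push_cast
    ring

lemma tpow_mul_uZ (k : ℕ) (n : ℤ) : t ^ k * uZ p s t n = uZ p s t (n - k) := by
  induction k with
  | zero => rw [pow_zero, one_mul]; norm_num
  | succ m ih =>
    rw [pow_succ', mul_assoc, ih, t_mul_uZ p s t hps hsp hpt htp hts hst hpp (n - m)]
    congr 1
    push_cast
    ring

lemma uZ_mul (m n : ℤ) : uZ p s t m * uZ p s t n = uZ p s t (m + n) := by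
  rcases lt_trichotomy m 0 with h | rfl | h
  · rw [uZ_of_neg p s t h, tpow_mul_uZ p s t hps hsp hpt htp hts hst hpp]
    congr 1
    omega
  · rw [uZ_zero, p_mul_uZ p s t hps hsp hpt htp hts hst hpp, zero_add]
  · rw [uZ_of_pos p s t h, spow_mul_uZ p s t hps hsp hpt htp hts hst hpp]
    congr 1
    omega

end UZ
end LPA
namespace LPA
open scoped Classical
open LaurentPolynomial
variable {V : Type*} {E : Type*} (G : Ultragraph V E) (R : Type*) [CommRing R]

noncomputable def genL (v : V) : LGen G → LaurentPolynomial R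
  | .edge _ => T 1
  | .ghost _ => T (-1)
  | .proj A => if v ∈ A.1 then 1 else 0

lemma rel_holds_L [Subsingleton E] (v : V) (hv : ∀ w : V, w = v)
    ⦃x y : FreeAlgebra R (LGen G)⦄ (h : LRel G R x y) :
    FreeAlgebra.lift R (genL G R v) x = FreeAlgebra.lift R (genL G R v) y := by
  have hmem : ∀ (e : E), v ∈ G.rng e := by
    intro e
    obtain ⟨w, hw⟩ := G.rng_nonempty e
    rwa [← hv w]
  have hsrc : ∀ (e : E), v ∈ ({G.src e} : Set V) :=
    fun e => Set.mem_singleton_iff.mpr (hv (G.src e)).symm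
  induction h with
  | projEmpty => simp [FreeAlgebra.lift_ι_apply, genL]
  | projInter A B =>
    simp only [map_mul, FreeAlgebra.lift_ι_apply, genL]
    by_cases hA : v ∈ A.1 <;> by_cases hB : v ∈ B.1 <;> simp [hA, hB, Set.mem_inter_iff]
  | projUnion A B =>
    simp only [map_mul, map_add, map_sub, FreeAlgebra.lift_ι_apply, genL]
    by_cases hA : v ∈ A.1 <;> by_cases hB : v ∈ B.1 <;>
      simp [hA, hB, Set.mem_inter_iff, Set.mem_union]
  | srcEdge e =>
    simp only [map_mul, FreeAlgebra.lift_ι_apply, genL]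
    rw [if_pos (hsrc e), one_mul]
  | edgeRng e =>
    simp only [map_mul, FreeAlgebra.lift_ι_apply, genL]
    rw [if_pos (hmem e), mul_one]
  | rngGhost e =>
    simp only [map_mul, FreeAlgebra.lift_ι_apply, genL]
    rw [if_pos (hmem e), one_mul]
  | ghostSrc e =>
    simp only [map_mul, FreeAlgebra.lift_ι_apply, genL]
    rw [if_pos (hsrc e), mul_one]
  | ghostEdgeSame e =>
    simp only [map_mul, FreeAlgebra.lift_ι_apply, genL]
    rw [if_pos (hmem e), ← T_add, show (-1 : ℤ) + 1 = 0 from by norm_num, T_zero]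
  | ghostEdgeDiff e f h => exact absurd (Subsingleton.elim e f) h
  | ck u h1 h2 =>
    obtain ⟨f0, hf0⟩ := h2
    have ht : h1.toFinset = {f0} := Finset.eq_singleton_iff_unique_mem.mpr
      ⟨(Set.Finite.mem_toFinset h1).mpr hf0, fun x _ => Subsingleton.elim x f0⟩
    simp only [map_sum, map_mul, FreeAlgebra.lift_ι_apply, genL, ht, Finset.sum_singleton]
    rw [if_pos (Set.mem_singleton_iff.mpr (hv u).symm), ← T_add,
      show (1 : ℤ) + (-1) = 0 from by norm_num, T_zero]

noncomputable def phiL [Subsingleton E] (v : V) (hv : ∀ w : V, w = v) :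
    LeavittAlg G R →ₐ[R] LaurentPolynomial R :=
  RingQuot.liftAlgHom R ⟨FreeAlgebra.lift R (genL G R v), rel_holds_L G R v hv⟩

variable [Subsingleton E]

lemma phiL_e (v : V) (hv : ∀ w : V, w = v) (e : E) : phiL G R v hv (eGen G R e) = T 1 := by
  rw [eGen, phiL]
  exact (RingQuot.liftAlgHom_mkAlgHom_apply R _ (rel_holds_L G R v hv) _).trans
    (by simp [FreeAlgebra.lift_ι_apply, genL])

lemma phiL_g (v : V) (hv : ∀ w : V, w = v) (e : E) : phiL G R v hv (gGen G R e) = T (-1) := by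
  rw [gGen, phiL]
  exact (RingQuot.liftAlgHom_mkAlgHom_apply R _ (rel_holds_L G R v hv) _).trans
    (by simp [FreeAlgebra.lift_ι_apply, genL])

lemma phiL_p (v : V) (hv : ∀ w : V, w = v) (A : {A : Set V // G.GZero A}) :
    phiL G R v hv (pGen G R A) = if v ∈ A.1 then 1 else 0 := by
  rw [pGen, phiL]
  exact (RingQuot.liftAlgHom_mkAlgHom_apply R _ (rel_holds_L G R v hv) _).trans
    (by simp [FreeAlgebra.lift_ι_apply, genL])

lemma case_single [Nontrivial R] (v : V) (hv : ∀ w : V, w = v) (e0 : E)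
    (hrng : ∀ (e : E) (w : V), w ∈ G.rng e → w = G.src e) :
    ∃ f : leavittSubalg G R →ₙₐ[R] LaurentPolynomial R, Function.Bijective f := by
  classical
  set s : LeavittAlg G R := eGen G R e0 with hs_def
  set t : LeavittAlg G R := gGen G R e0 with ht_def
  set p : LeavittAlg G R := pGen G R ⟨{v}, Ultragraph.GZero.singleton v⟩ with hp_def
  have hsingle : ∀ (A : Set V), A.Nonempty → A = {v} := by
    intro A hA
    ext x
    simp only [Set.mem_singleton_iff]
    exact ⟨fun _ => hv x, fun hx => by obtain ⟨y, hy⟩ := hA; rwa [hx, ← hv y]⟩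
  have hsv : G.src e0 = v := hv _
  have hpsrc : p = pGen G R ⟨{G.src e0}, Ultragraph.GZero.singleton _⟩ :=
    pGen_congr G R _ _ (by rw [hsv])
  have hprng : p = pGen G R ⟨G.rng e0, Ultragraph.GZero.range e0⟩ :=
    pGen_congr G R _ _ (hsingle (G.rng e0) (G.rng_nonempty e0)).symm
  have hps : p * s = s := by rw [hpsrc]; exact psrc_mul_e G R e0
  have hsp : s * p = s := by rw [hprng]; exact e_mul_prng G R e0
  have hpt : p * t = t := by rw [hprng]; exact prng_mul_g G R e0
  have htp : t * p = t := by rw [hpsrc]; exact g_mul_psrc G R e0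
  have hts : t * s = p := by rw [hprng]; exact g_mul_e_same G R e0
  have hpp : p * p = p := by
    rw [hp_def, pGen_mul]
    exact pGen_congr G R _ _ (by simp)
  have hst : s * t = p := by
    have h1 : {f : E | G.src f = v}.Finite := Set.subsingleton_of_subsingleton.finite
    have h2 : {f : E | G.src f = v}.Nonempty := ⟨e0, hsv⟩
    have ht : h1.toFinset = {e0} := Finset.eq_singleton_iff_unique_mem.mpr
      ⟨(Set.Finite.mem_toFinset h1).mpr hsv, fun x _ => Subsingleton.elim x e0⟩
    have := ck_eq G R v h1 h2
    rw [ht, Finset.sum_singleton] at this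
    exact this.symm
  -- the inverse linear map
  set ψ : LaurentPolynomial R →ₗ[R] LeavittAlg G R :=
    (Finsupp.linearCombination R (uZ p s t)).comp (AddMonoidAlgebra.coeffLinearEquiv R).toLinearMap with hψ_def
  have hψ_single : ∀ (n : ℤ) (r : R),
      ψ (AddMonoidAlgebra.single n r : LaurentPolynomial R) = r • uZ p s t n := by
    intro n r
    exact Finsupp.linearCombination_single R r n
  have hψ_T : ∀ n : ℤ, ψ (T n) = uZ p s t n := by
    intro n
    rw [show (T n : LaurentPolynomial R) = AddMonoidAlgebra.single n 1 from rfl, hψ_single, one_smul]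
  have hsingle_T : ∀ (n : ℤ) (r : R), (AddMonoidAlgebra.single n r : LaurentPolynomial R) = r • T n := by
    intro n r
    rw [show (T n : LaurentPolynomial R) = AddMonoidAlgebra.single n 1 from rfl, AddMonoidAlgebra.smul_single,
      smul_eq_mul, mul_one]
  have hψ_mul : ∀ x y : LaurentPolynomial R, ψ (x * y) = ψ x * ψ y := by
    intro x y
    induction x using AddMonoidAlgebra.induction_linear with
    | zero => rw [zero_mul, map_zero, zero_mul]
    | add f g hf hg => rw [add_mul, map_add, map_add, hf, hg, add_mul]
    | single a b =>
      induction y using AddMonoidAlgebra.induction_linear with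
      | zero => rw [mul_zero, map_zero, mul_zero]
      | add f g hf hg => rw [mul_add, map_add, map_add, hf, hg, mul_add]
      | single c d =>
        rw [hsingle_T a b, hsingle_T c d, smul_mul_smul_comm, ← T_add, map_smul, hψ_T,
          map_smul, map_smul, hψ_T, hψ_T, smul_mul_smul_comm,
          uZ_mul p s t hps hsp hpt htp hts hst hpp]
  have hφs : phiL G R v hv s = T 1 := by rw [hs_def]; exact phiL_e G R v hv e0
  have hφt : phiL G R v hv t = T (-1) := by rw [ht_def]; exact phiL_g G R v hv e0
  have hφp : phiL G R v hv p = 1 := by rw [hp_def, phiL_p]; simp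
  have hφu : ∀ n : ℤ, phiL G R v hv (uZ p s t n) = T n := by
    intro n
    rcases lt_trichotomy n 0 with h | rfl | h
    · rw [uZ_of_neg p s t h, map_pow, hφt, T_pow]
      congr 1
      omega
    · rw [uZ_zero, hφp, ← T_zero]
    · rw [uZ_of_pos p s t h, map_pow, hφs, T_pow]
      congr 1
      omega
  have hφψ : ∀ y : LaurentPolynomial R, phiL G R v hv (ψ y) = y := by
    intro y
    induction y using AddMonoidAlgebra.induction_linear with
    | zero => rw [map_zero, map_zero]
    | add f g hf hg => rw [map_add, map_add, hf, hg]
    | single a b => rw [hψ_single, map_smul, hφu, hsingle_T]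
  have hu_mem : ∀ n : ℤ, uZ p s t n ∈ leavittSubalg G R := by
    have hpow : ∀ (x : LeavittAlg G R), x ∈ leavittSubalg G R →
        ∀ k : ℕ, x ^ (k+1) ∈ leavittSubalg G R := by
      intro x hx k
      induction k with
      | zero => rwa [pow_one]
      | succ m ih => rw [pow_succ]; exact mul_mem ih hx
    intro n
    rcases lt_trichotomy n 0 with h | rfl | h
    · rw [uZ_of_neg p s t h]
      obtain ⟨m, hm⟩ : ∃ m, (-n).toNat = m + 1 := ⟨(-n).toNat - 1, by omega⟩
      rw [hm]
      exact hpow t (gGen_mem G R e0) m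
    · rw [uZ_zero]
      exact pGen_mem G R _
    · rw [uZ_of_pos p s t h]
      obtain ⟨m, hm⟩ : ∃ m, n.toNat = m + 1 := ⟨n.toNat - 1, by omega⟩
      rw [hm]
      exact hpow s (eGen_mem G R e0) m
  have hψ_mem : ∀ y : LaurentPolynomial R, ψ y ∈ leavittSubalg G R := by
    intro y
    induction y using AddMonoidAlgebra.induction_linear with
    | zero => rw [map_zero]; exact zero_mem _
    | add f g hf hg => rw [map_add]; exact add_mem hf hg
    | single a b => rw [hψ_single]; exact SMulMemClass.smul_mem b (hu_mem a)
  have hψφ : ∀ x ∈ leavittSubalg G R, ψ (phiL G R v hv x) = x := by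
    intro x hx
    induction hx using NonUnitalAlgebra.adjoin_induction with
    | mem x hx =>
      rcases hx with ⟨e, he⟩ | ⟨e, he⟩ | ⟨A, hA⟩
      · subst he
        rw [show e = e0 from Subsingleton.elim e e0, ← hs_def, hφs, hψ_T,
          uZ_of_pos p s t (by norm_num), show ((1:ℤ)).toNat = 1 from rfl, pow_one]
      · subst he
        rw [show e = e0 from Subsingleton.elim e e0, ← ht_def, hφt, hψ_T,
          uZ_of_neg p s t (by norm_num), show ((-(-1:ℤ)).toNat) = 1 from rfl, pow_one]
      · subst hA
        by_cases hne : A.1.Nonempty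
        · have hpA : pGen G R A = p := by
            rw [hp_def]
            exact pGen_congr G R A.2 _ (hsingle A.1 hne)
          rw [hpA, hφp, ← T_zero, hψ_T, uZ_zero]
        · have hAe : A.1 = ∅ := Set.not_nonempty_iff_eq_empty.mp hne
          have hpA : pGen G R A = 0 := by
            rw [show A = ⟨∅, Ultragraph.GZero.empty⟩ from Subtype.ext hAe]
            exact pGen_empty G R
          rw [hpA, map_zero, map_zero]
    | add x y hx hy ihx ihy => rw [map_add, map_add, ihx, ihy]
    | zero => rw [map_zero, map_zero]
    | mul x y hx hy ihx ihy => rw [map_mul, hψ_mul, ihx, ihy]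
    | smul r x hx ihx => rw [map_smul, map_smul, ihx]
  refine ⟨((phiL G R v hv).toNonUnitalAlgHom.comp
    (NonUnitalSubalgebraClass.subtype (leavittSubalg G R))), ?_, ?_⟩
  · intro a b hab
    apply Subtype.ext
    have hpq : phiL G R v hv a.1 = phiL G R v hv b.1 := hab
    rw [← hψφ a.1 a.2, ← hψφ b.1 b.2, hpq]
  · intro y
    refine ⟨⟨ψ y, hψ_mem y⟩, ?_⟩
    show phiL G R v hv (ψ y) = y
    exact hφψ y

end LPA

/-- If `𝒢` is connected and the center of `L_R(𝒢)` equals the abelian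
core `M(L_R(𝒢))`, then `𝒢` consists of a single vertex and at most one edge, and
consequently `L_R(𝒢)` is isomorphic to `R` or to `R[x, x⁻¹]`. -/
theorem center_eq_core_implies_single_vertex
    {V E : Type*} [Countable V] [Countable E] [Nonempty V]
    (G : Ultragraph V E) (hconn : G.Connected)
    (R : Type*) [CommRing R] [Nontrivial R]
    (hZ : ∀ x : LeavittAlg G R,
      (x ∈ leavittSubalg G R ∧ ∀ y ∈ leavittSubalg G R, x * y = y * x) ↔
        x ∈ coreSubalg G R) :
    ((∃ v : V, ∀ w : V, w = v) ∧ Subsingleton E) ∧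
      ((∃ f : leavittSubalg G R →ₙₐ[R] R, Function.Bijective f) ∨
        ∃ f : leavittSubalg G R →ₙₐ[R] LaurentPolynomial R, Function.Bijective f) := by
  classical
  have hcent : ∀ x ∈ coreSubalg G R, ∀ y ∈ leavittSubalg G R, x * y = y * x :=
    fun x hx => ((hZ x).mpr hx).2
  -- Step 1: the range of every edge is its source.
  have hrng : ∀ (e : E) (w : V), w ∈ G.rng e → w = G.src e := by
    intro e w hw
    by_contra hne
    have hc := hcent _ (LPA.pGen_mem_core G R (Ultragraph.GZero.singleton (G.src e))
      (Set.singleton_nonempty _)) (eGen G R e) (LPA.eGen_mem G R e)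
    have hsp : eGen G R e * pGen G R ⟨{G.src e}, Ultragraph.GZero.singleton _⟩ = eGen G R e := by
      rw [← hc, LPA.psrc_mul_e]
    have h2 : pGen G R ⟨G.rng e, Ultragraph.GZero.range e⟩ =
        pGen G R ⟨G.rng e ∩ {G.src e},
          (Ultragraph.GZero.range e).inter (Ultragraph.GZero.singleton _)⟩ := by
      calc pGen G R ⟨G.rng e, Ultragraph.GZero.range e⟩
          = gGen G R e * eGen G R e := (LPA.g_mul_e_same G R e).symm
        _ = gGen G R e * (eGen G R e * pGen G R ⟨{G.src e}, Ultragraph.GZero.singleton _⟩) := by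
            rw [hsp]
        _ = (gGen G R e * eGen G R e) * pGen G R ⟨{G.src e}, Ultragraph.GZero.singleton _⟩ := by
            rw [mul_assoc]
        _ = pGen G R ⟨G.rng e, Ultragraph.GZero.range e⟩ *
              pGen G R ⟨{G.src e}, Ultragraph.GZero.singleton _⟩ := by rw [LPA.g_mul_e_same]
        _ = _ := LPA.pGen_mul G R _ _
    have h3 : pGen G R ⟨{w}, Ultragraph.GZero.singleton w⟩ = 0 := by
      have e1 : pGen G R ⟨{w}, Ultragraph.GZero.singleton w⟩ =
          pGen G R ⟨{w} ∩ G.rng e,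
            (Ultragraph.GZero.singleton w).inter (Ultragraph.GZero.range e)⟩ :=
        LPA.pGen_congr G R _ _
          (Set.inter_eq_self_of_subset_left (Set.singleton_subset_iff.mpr hw)).symm
      have e2 : ({w} : Set V) ∩ (G.rng e ∩ {G.src e}) = ∅ := by
        ext x
        simp only [Set.mem_inter_iff, Set.mem_singleton_iff, Set.mem_empty_iff_false,
          iff_false, not_and]
        rintro rfl _ hx
        exact hne hx
      have e3 : pGen G R ⟨{w}, Ultragraph.GZero.singleton w⟩ *
            pGen G R ⟨G.rng e, Ultragraph.GZero.range e⟩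
          = pGen G R ⟨{w} ∩ G.rng e,
              (Ultragraph.GZero.singleton w).inter (Ultragraph.GZero.range e)⟩ :=
        LPA.pGen_mul G R _ _
      have e4 : pGen G R ⟨{w}, Ultragraph.GZero.singleton w⟩ *
            pGen G R ⟨G.rng e ∩ {G.src e},
              (Ultragraph.GZero.range e).inter (Ultragraph.GZero.singleton _)⟩
          = pGen G R ⟨{w} ∩ (G.rng e ∩ {G.src e}),
              (Ultragraph.GZero.singleton w).inter
                ((Ultragraph.GZero.range e).inter (Ultragraph.GZero.singleton _))⟩ :=
        LPA.pGen_mul G R _ _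
      rw [e1, ← e3, h2, e4, LPA.pGen_congr G R _ Ultragraph.GZero.empty e2, LPA.pGen_empty]
    exact LPA.pGen_ne_zero G R (Ultragraph.GZero.singleton w) rfl h3
  -- Step 2: single vertex.
  obtain ⟨v⟩ := (inferInstance : Nonempty V)
  have hv : ∀ w : V, w = v := by
    intro w
    rcases hconn v w with h | ⟨α, e, hα, hh, hs, hw⟩
    · exact h.symm
    · have h2 := LPA.pathRange_subset G hrng α e hα hh hw
      rw [Set.mem_singleton_iff] at h2
      rw [h2, hs]
  have hsingle : ∀ (A : Set V), A.Nonempty → A = {v} := by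
    intro A hA
    ext x
    simp only [Set.mem_singleton_iff]
    exact ⟨fun _ => hv x, fun hx => by obtain ⟨y, hy⟩ := hA; rwa [hx, ← hv y]⟩
  -- Step 3: at most one edge.
  have hE : Subsingleton E := by
    constructor
    intro e f
    by_contra hef
    have hq := hcent _ (LPA.q_mem_core G R e) (eGen G R f) (LPA.eGen_mem G R f)
    have h1 : eGen G R f * (eGen G R e * gGen G R e) = 0 := by
      rw [← hq, mul_assoc, LPA.g_mul_e_diff G R e f hef, mul_zero]
    have h2 : eGen G R f * eGen G R e = 0 := by
      have h2' := congrArg (· * eGen G R e) h1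
      simp only [zero_mul] at h2'
      rw [mul_assoc, mul_assoc, LPA.g_mul_e_same G R e, LPA.e_mul_prng G R e] at h2'
      exact h2'
    have h3 : pGen G R ⟨G.rng e, Ultragraph.GZero.range e⟩ = 0 := by
      have h3' := congrArg (fun x => gGen G R e * (gGen G R f * x)) h2
      simp only [mul_zero] at h3'
      rw [show gGen G R f * (eGen G R f * eGen G R e)
          = (gGen G R f * eGen G R f) * eGen G R e from (mul_assoc _ _ _).symm,
        LPA.g_mul_e_same G R f] at h3'
      have hpf : pGen G R ⟨G.rng f, Ultragraph.GZero.range f⟩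
          = pGen G R ⟨{G.src e}, Ultragraph.GZero.singleton _⟩ :=
        LPA.pGen_congr G R _ _ (by
          rw [hsingle (G.rng f) (G.rng_nonempty f), hsingle {G.src e} (Set.singleton_nonempty _)])
      rw [hpf, ← mul_assoc, show gGen G R e * pGen G R ⟨{G.src e}, Ultragraph.GZero.singleton _⟩
          = gGen G R e from LPA.g_mul_psrc G R e, LPA.g_mul_e_same G R e] at h3'
      exact h3'
    obtain ⟨w0, hw0⟩ := G.rng_nonempty e
    exact LPA.pGen_ne_zero G R (Ultragraph.GZero.range e) hw0 h3
  refine ⟨⟨⟨v, hv⟩, hE⟩, ?_⟩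
  rcases isEmpty_or_nonempty E with hEe | hEn
  · exact Or.inl (LPA.case_empty G R v hv)
  · exact Or.inr (LPA.case_single G R v hv (Classical.arbitrary E) hrng)
end
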